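/- arXiv:0810.5376 — 6 statements merged into one kernel-verified Lean document; each statement's English description precedes it below -/
import Mathlib

section
/- Let F be a complete geodesic metric space that is tree-graded with respect to a collection 𝒫 of pieces, and let x, y ∈ F be two distinct points such that no point of Cutp{x,y} is at equal distance from x and y. Let a be the point of Cutp{x,y} farthest from x among the points p ∈ Cutp{x,y} with dist(x,p) ≤ dist(x,y)/2, and let b be the point of Cutp{x,y} farthest from y among the points q ∈ Cutp{x,y} with dist(y,q) ≤ dist(x,y)/2. Then there exists a unique piece P ∈ 𝒫 containing both a and b, and every point m ∈ F with dist(x,m) = dist(y,m) = dist(x,y)/2 belongs to P. -/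
/-- A geodesic from `x` to `y`, parametrized by arc length on the interval `[0, dist x y]`. -/
def IsGeodesicFrom {X : Type*} [MetricSpace X] (γ : ℝ → X) (x y : X) : Prop :=
  γ 0 = x ∧ γ (dist x y) = y ∧
    ∀ s ∈ Set.Icc (0 : ℝ) (dist x y), ∀ t ∈ Set.Icc (0 : ℝ) (dist x y),
      dist (γ s) (γ t) = |s - t|

/-- A metric space is geodesic if every two points are joined by a geodesic. -/
def IsGeodesicSpace (X : Type*) [MetricSpace X] : Prop :=
  ∀ x y : X, ∃ γ : ℝ → X, IsGeodesicFrom γ x y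

/-- A subset is geodesic if every two of its points are joined by a geodesic contained in it. -/
def IsGeodesicSubset {X : Type*} [MetricSpace X] (A : Set X) : Prop :=
  ∀ x ∈ A, ∀ y ∈ A, ∃ γ : ℝ → X, IsGeodesicFrom γ x y ∧
    γ '' Set.Icc (0 : ℝ) (dist x y) ⊆ A

/-- A simple non-trivial geodesic triangle with pairwise distinct vertices `x, y, z` and
sides `γ₁, γ₂, γ₃`, any two sides meeting exactly in their common vertex. -/
def IsSimpleGeodesicTriangle {X : Type*} [MetricSpace X]
    (γ₁ γ₂ γ₃ : ℝ → X) (x y z : X) : Prop :=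
  x ≠ y ∧ y ≠ z ∧ z ≠ x ∧
  IsGeodesicFrom γ₁ x y ∧ IsGeodesicFrom γ₂ y z ∧ IsGeodesicFrom γ₃ z x ∧
  (γ₁ '' Set.Icc (0 : ℝ) (dist x y)) ∩ (γ₂ '' Set.Icc (0 : ℝ) (dist y z)) = {y} ∧
  (γ₂ '' Set.Icc (0 : ℝ) (dist y z)) ∩ (γ₃ '' Set.Icc (0 : ℝ) (dist z x)) = {z} ∧
  (γ₃ '' Set.Icc (0 : ℝ) (dist z x)) ∩ (γ₁ '' Set.Icc (0 : ℝ) (dist x y)) = {x}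

/-- `𝒞` is a tree-grading of the complete geodesic metric space `X`:
a collection of closed geodesic proper subsets (pieces) covering `X` such that
(T₁) two distinct pieces meet in at most one point, and
(T₂) every simple non-trivial geodesic triangle is contained in one piece. -/
structure IsTreeGraded (X : Type*) [MetricSpace X] (𝒞 : Set (Set X)) : Prop where
  closed : ∀ P ∈ 𝒞, IsClosed P
  geodesic : ∀ P ∈ 𝒞, IsGeodesicSubset P
  proper : ∀ P ∈ 𝒞, P ≠ Set.univ
  covers : ⋃₀ 𝒞 = Set.univ
  t1 : ∀ P ∈ 𝒞, ∀ Q ∈ 𝒞, P ≠ Q → (P ∩ Q).Subsingleton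
  t2 : ∀ (γ₁ γ₂ γ₃ : ℝ → X) (x y z : X), IsSimpleGeodesicTriangle γ₁ γ₂ γ₃ x y z →
    ∃ P ∈ 𝒞, (γ₁ '' Set.Icc (0 : ℝ) (dist x y)) ∪ (γ₂ '' Set.Icc (0 : ℝ) (dist y z)) ∪
      (γ₃ '' Set.Icc (0 : ℝ) (dist z x)) ⊆ P

/-- The set of cut-points of the arc `γ([0,d])`: the complement, in the arc, of the union of
the interiors of all subarcs arising as intersections of the arc with a single piece. -/
def cutpSet {X : Type*} [MetricSpace X] (𝒞 : Set (Set X)) (γ : ℝ → X) (d : ℝ) : Set X :=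
  {p | ∃ t ∈ Set.Icc (0 : ℝ) d, γ t = p ∧
    ¬ ∃ P ∈ 𝒞, ∃ s u : ℝ, 0 ≤ s ∧ s < t ∧ t < u ∧ u ≤ d ∧
      γ '' Set.Icc s u = (γ '' Set.Icc (0 : ℝ) d) ∩ P}


section Helpers
variable {X : Type*} [MetricSpace X]

lemma iso_inj {γ : ℝ → X} {d : ℝ}
    (hiso : ∀ s ∈ Set.Icc (0:ℝ) d, ∀ t ∈ Set.Icc (0:ℝ) d, dist (γ s) (γ t) = |s - t|)
    {s t : ℝ} (hs : s ∈ Set.Icc (0:ℝ) d) (ht : t ∈ Set.Icc (0:ℝ) d) (h : γ s = γ t) :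
    s = t := by
  have h2 := hiso s hs t ht
  rw [h, dist_self] at h2
  have h3 := abs_eq_zero.mp h2.symm
  linarith [sub_eq_zero.mp h3]

lemma sub_forward {γ : ℝ → X} {d : ℝ}
    (hiso : ∀ s ∈ Set.Icc (0:ℝ) d, ∀ t ∈ Set.Icc (0:ℝ) d, dist (γ s) (γ t) = |s - t|)
    {s u : ℝ} (h0 : 0 ≤ s) (hsu : s ≤ u) (hud : u ≤ d) :
    IsGeodesicFrom (fun r => γ (s + r)) (γ s) (γ u) ∧
      (fun r => γ (s + r)) '' Set.Icc 0 (dist (γ s) (γ u)) = γ '' Set.Icc s u := by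
  have hd : dist (γ s) (γ u) = u - s := by
    rw [hiso s ⟨h0, hsu.trans hud⟩ u ⟨h0.trans hsu, hud⟩, abs_sub_comm,
      abs_of_nonneg (by linarith)]
  constructor
  · refine ⟨by simp, ?_, ?_⟩
    · simp only [hd]
      show γ (s + (u - s)) = γ u
      rw [show s + (u - s) = u by ring]
    · intro r hr r' hr'
      rw [hd] at hr hr'
      simp only
      rw [hiso (s + r) ⟨by linarith [hr.1], by linarith [hr.2]⟩
        (s + r') ⟨by linarith [hr'.1], by linarith [hr'.2]⟩]
      congr 1; ring
  · rw [hd]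
    ext z
    simp only [Set.mem_image, Set.mem_Icc]
    constructor
    · rintro ⟨r, ⟨h1, h2⟩, h3⟩
      exact ⟨s + r, ⟨by linarith, by linarith⟩, h3⟩
    · rintro ⟨r, ⟨h1, h2⟩, h3⟩
      exact ⟨r - s, ⟨by linarith, by linarith⟩, by rw [show s + (r - s) = r by ring]; exact h3⟩

lemma sub_backward {γ : ℝ → X} {d : ℝ}
    (hiso : ∀ s ∈ Set.Icc (0:ℝ) d, ∀ t ∈ Set.Icc (0:ℝ) d, dist (γ s) (γ t) = |s - t|)
    {s u : ℝ} (h0 : 0 ≤ s) (hsu : s ≤ u) (hud : u ≤ d) :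
    IsGeodesicFrom (fun r => γ (u - r)) (γ u) (γ s) ∧
      (fun r => γ (u - r)) '' Set.Icc 0 (dist (γ u) (γ s)) = γ '' Set.Icc s u := by
  have hd : dist (γ u) (γ s) = u - s := by
    rw [hiso u ⟨h0.trans hsu, hud⟩ s ⟨h0, hsu.trans hud⟩, abs_of_nonneg (by linarith)]
  constructor
  · refine ⟨by simp, ?_, ?_⟩
    · simp only [hd]
      show γ (u - (u - s)) = γ s
      rw [show u - (u - s) = s by ring]
    · intro r hr r' hr'
      rw [hd] at hr hr'
      simp only
      rw [hiso (u - r) ⟨by linarith [hr.2], by linarith [hr.1]⟩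
        (u - r') ⟨by linarith [hr'.2], by linarith [hr'.1]⟩]
      rw [show u - r - (u - r') = -(r - r') by ring, abs_neg]
  · rw [hd]
    ext z
    simp only [Set.mem_image, Set.mem_Icc]
    constructor
    · rintro ⟨r, ⟨h1, h2⟩, h3⟩
      exact ⟨u - r, ⟨by linarith, by linarith⟩, h3⟩
    · rintro ⟨r, ⟨h1, h2⟩, h3⟩
      exact ⟨u - r, ⟨by linarith, by linarith⟩, by rw [show u - (u - r) = r by ring]; exact h3⟩

lemma endpoint_mem_cutp {𝒞 : Set (Set X)} (htg : IsTreeGraded X 𝒞)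
    {γ : ℝ → X} {d : ℝ}
    (hiso : ∀ s ∈ Set.Icc (0:ℝ) d, ∀ t ∈ Set.Icc (0:ℝ) d, dist (γ s) (γ t) = |s - t|)
    {P : Set X} (hP : P ∈ 𝒞) {s u : ℝ} (h0 : 0 ≤ s) (hsu : s < u) (hud : u ≤ d)
    (heq : γ '' Set.Icc s u = (γ '' Set.Icc (0:ℝ) d) ∩ P) :
    γ s ∈ cutpSet 𝒞 γ d ∧ γ u ∈ cutpSet 𝒞 γ d := by
  have hsd : s ≤ d := (hsu.le).trans hud
  have hu0 : 0 ≤ u := h0.trans hsu.le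
  have hsP : γ s ∈ P := by
    have : γ s ∈ γ '' Set.Icc s u := ⟨s, ⟨le_refl s, hsu.le⟩, rfl⟩
    rw [heq] at this; exact this.2
  have huP : γ u ∈ P := by
    have : γ u ∈ γ '' Set.Icc s u := ⟨u, ⟨hsu.le, le_refl u⟩, rfl⟩
    rw [heq] at this; exact this.2
  constructor
  · refine ⟨s, ⟨h0, hsd⟩, rfl, ?_⟩
    rintro ⟨Q, hQ, s', u', h1, h2, h3, h4, h5⟩
    by_cases hQP : Q = P
    · subst hQP
      have : γ s' ∈ γ '' Set.Icc s u := by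
        rw [heq, ← h5]; exact ⟨s', ⟨le_refl s', by linarith⟩, rfl⟩
      obtain ⟨t, htm, hte⟩ := this
      have := iso_inj hiso ⟨by linarith [htm.1], by linarith [htm.2]⟩
        ⟨h1, by linarith⟩ hte
      linarith [htm.1]
    · have hsQ : γ s ∈ Q := by
        have : γ s ∈ γ '' Set.Icc s' u' := ⟨s, ⟨by linarith, by linarith⟩, rfl⟩
        rw [h5] at this; exact this.2
      have hc : γ (min u u') ∈ P ∩ Q := by
        constructor
        · have : γ (min u u') ∈ γ '' Set.Icc s u :=
            ⟨min u u', ⟨le_min hsu.le (by linarith), min_le_left u u'⟩, rfl⟩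
          rw [heq] at this; exact this.2
        · have : γ (min u u') ∈ γ '' Set.Icc s' u' :=
            ⟨min u u', ⟨by have := le_min hsu.le h3.le; linarith [min_le_left u u'],
              min_le_right u u'⟩, rfl⟩
          rw [h5] at this; exact this.2
      have hsub := htg.t1 P hP Q hQ (fun h => hQP h.symm)
      have heqp := hsub ⟨hsP, hsQ⟩ hc
      have := iso_inj hiso ⟨h0, hsd⟩
        ⟨le_min hu0 (by linarith), le_trans (min_le_left u u') hud⟩ heqp
      have hlt : s < min u u' := lt_min hsu h3
      linarith
  · refine ⟨u, ⟨hu0, hud⟩, rfl, ?_⟩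
    rintro ⟨Q, hQ, s', u', h1, h2, h3, h4, h5⟩
    by_cases hQP : Q = P
    · subst hQP
      have : γ u' ∈ γ '' Set.Icc s u := by
        rw [heq, ← h5]; exact ⟨u', ⟨by linarith, le_refl u'⟩, rfl⟩
      obtain ⟨t, htm, hte⟩ := this
      have := iso_inj hiso ⟨by linarith [htm.1], by linarith [htm.2]⟩
        ⟨by linarith, h4⟩ hte
      linarith [htm.2]
    · have huQ : γ u ∈ Q := by
        have : γ u ∈ γ '' Set.Icc s' u' := ⟨u, ⟨h2.le, h3.le⟩, rfl⟩
        rw [h5] at this; exact this.2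
      have hc : γ (max s s') ∈ P ∩ Q := by
        constructor
        · have : γ (max s s') ∈ γ '' Set.Icc s u :=
            ⟨max s s', ⟨le_max_left s s', max_le hsu.le h2.le⟩, rfl⟩
          rw [heq] at this; exact this.2
        · have : γ (max s s') ∈ γ '' Set.Icc s' u' :=
            ⟨max s s', ⟨le_max_right s s',
              by have := max_le hsu.le h2.le; linarith⟩, rfl⟩
          rw [h5] at this; exact this.2
      have hsub := htg.t1 P hP Q hQ (fun h => hQP h.symm)
      have heqp := hsub ⟨huP, huQ⟩ hc
      have := iso_inj hiso ⟨hu0, hud⟩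
        ⟨le_trans h0 (le_max_left s s'), max_le hsd (by linarith)⟩ heqp
      have hlt : max s s' < u := max_lt hsu h2
      linarith

lemma exists_geodesic_through_mid (hgeo : IsGeodesicSpace X)
    (x y m : X) (hxy : x ≠ y)
    (h1 : dist x m = dist x y / 2) (h2 : dist y m = dist x y / 2) :
    ∃ δ : ℝ → X, IsGeodesicFrom δ x y ∧ δ (dist x y / 2) = m := by
  obtain ⟨g1, hg10, hg1d, hg1iso⟩ := hgeo x m
  obtain ⟨g2, hg20, hg2d, hg2iso⟩ := hgeo m y
  set d := dist x y with hd
  have hd0 : 0 < d := dist_pos.mpr hxy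
  rw [h1] at hg1d hg1iso
  have hmy : dist m y = d / 2 := by rw [dist_comm]; exact h2
  rw [hmy] at hg2d hg2iso
  have hg1m : g1 (d / 2) = m := hg1d
  have hxg1 : ∀ r ∈ Set.Icc (0:ℝ) (d/2), dist x (g1 r) = r := by
    intro r hr
    have := hg1iso 0 ⟨le_refl 0, by linarith⟩ r hr
    rw [hg10] at this
    rw [this, zero_sub, abs_neg, abs_of_nonneg hr.1]
  have hg2y : ∀ r ∈ Set.Icc (0:ℝ) (d/2), dist (g2 r) y = d/2 - r := by
    intro r hr
    have := hg2iso r hr (d/2) ⟨by linarith, le_refl _⟩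
    rw [hg2d] at this
    rw [this, abs_of_nonpos (by linarith [hr.2])]
    ring
  have hg1mdist : ∀ r ∈ Set.Icc (0:ℝ) (d/2), dist (g1 r) m = d/2 - r := by
    intro r hr
    have := hg1iso r hr (d/2) ⟨by linarith, le_refl _⟩
    rw [hg1m] at this
    rw [this, abs_of_nonpos (by linarith [hr.2])]
    ring
  have hmg2 : ∀ r ∈ Set.Icc (0:ℝ) (d/2), dist m (g2 r) = r := by
    intro r hr
    have := hg2iso 0 ⟨le_refl 0, by linarith⟩ r hr
    rw [hg20] at this
    rw [this, zero_sub, abs_neg, abs_of_nonneg hr.1]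
  have key : ∀ s t : ℝ, 0 ≤ s → s ≤ d/2 → d/2 < t → t ≤ d →
      dist (g1 s) (g2 (t - d/2)) = t - s := by
    intro s t hs1 hs2 ht1 ht2
    have hr : t - d/2 ∈ Set.Icc (0:ℝ) (d/2) := ⟨by linarith, by linarith⟩
    have hub : dist (g1 s) (g2 (t - d/2)) ≤ t - s := by
      have := dist_triangle (g1 s) m (g2 (t - d/2))
      rw [hg1mdist s ⟨hs1, hs2⟩, hmg2 _ hr] at this
      linarith
    have hlb : t - s ≤ dist (g1 s) (g2 (t - d/2)) := by
      have h4 := dist_triangle4 x (g1 s) (g2 (t - d/2)) y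
      rw [hxg1 s ⟨hs1, hs2⟩, hg2y _ hr, ← hd] at h4
      have : dist x (g1 s) = dist (g1 s) x := dist_comm _ _
      linarith [h4]
    linarith
  refine ⟨fun t => if t ≤ d/2 then g1 t else g2 (t - d/2), ⟨?_, ?_, ?_⟩, ?_⟩
  · simp only [if_pos (by linarith : (0:ℝ) ≤ d/2)]
    exact hg10
  · rw [← hd]
    simp only [if_neg (by linarith : ¬ d ≤ d/2)]
    rw [show d - d/2 = d/2 by ring]
    exact hg2d
  · rw [← hd]
    intro s hs t ht
    by_cases hsc : s ≤ d/2 <;> by_cases htc : t ≤ d/2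
    · simp only [if_pos hsc, if_pos htc]
      exact hg1iso s ⟨hs.1, hsc⟩ t ⟨ht.1, htc⟩
    · simp only [if_pos hsc, if_neg htc]
      push_neg at htc
      rw [key s t hs.1 hsc htc ht.2, abs_of_nonpos (by linarith)]
      ring
    · simp only [if_neg hsc, if_pos htc]
      push_neg at hsc
      rw [dist_comm, key t s ht.1 htc hsc hs.2, abs_of_nonneg (by linarith)]
    · simp only [if_neg hsc, if_neg htc]
      push_neg at hsc htc
      rw [hg2iso (s - d/2) ⟨by linarith, by linarith [hs.2]⟩
        (t - d/2) ⟨by linarith, by linarith [ht.2]⟩]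
      rw [show s - d/2 - (t - d/2) = s - t by ring]
  · simp only [if_pos (le_refl (d/2))]
    exact hg1m

end Helpers


/-- In a complete geodesic metric space `X` tree-graded with respect to `𝒞`,
if `x ≠ y` and no point of `Cutp{x,y}` is equidistant from `x` and `y`, and `a` (resp. `b`) is
the point of `Cutp{x,y}` farthest from `x` (resp. from `y`) among those at distance at most
`dist x y / 2` from `x` (resp. from `y`), then there is a unique piece containing both `a` and
`b`, and this piece contains every point equidistant from `x` and `y` at distance
`dist x y / 2` from both. -/
theorem statement0 {X : Type*} [MetricSpace X] [CompleteSpace X]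
    (hgeo : IsGeodesicSpace X) (𝒞 : Set (Set X)) (htg : IsTreeGraded X 𝒞)
    (x y : X) (hxy : x ≠ y)
    (γ : ℝ → X) (hγ : IsGeodesicFrom γ x y)
    (hnomid : ∀ p ∈ cutpSet 𝒞 γ (dist x y), dist x p ≠ dist y p)
    (a : X) (ha : a ∈ cutpSet 𝒞 γ (dist x y))
    (ha2 : dist x a ≤ dist x y / 2)
    (ha3 : ∀ p ∈ cutpSet 𝒞 γ (dist x y), dist x p ≤ dist x y / 2 → dist x p ≤ dist x a)
    (b : X) (hb : b ∈ cutpSet 𝒞 γ (dist x y))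
    (hb2 : dist y b ≤ dist x y / 2)
    (hb3 : ∀ p ∈ cutpSet 𝒞 γ (dist x y), dist y p ≤ dist x y / 2 → dist y p ≤ dist y b) :
    ∃ P, P ∈ 𝒞 ∧ a ∈ P ∧ b ∈ P ∧
      (∀ Q, Q ∈ 𝒞 → a ∈ Q → b ∈ Q → Q = P) ∧
      ∀ m : X, dist x m = dist x y / 2 → dist y m = dist x y / 2 → m ∈ P := by
  obtain ⟨hγ0, hγd, hγiso⟩ := hγ
  set d := dist x y with hdd
  have hd0 : 0 < d := dist_pos.mpr hxy
  have hdx : ∀ t ∈ Set.Icc (0:ℝ) d, dist x (γ t) = t := by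
    intro t ht
    have := hγiso 0 ⟨le_refl 0, hd0.le⟩ t ht
    rw [hγ0] at this
    rw [this, zero_sub, abs_neg, abs_of_nonneg ht.1]
  have hdy : ∀ t ∈ Set.Icc (0:ℝ) d, dist y (γ t) = d - t := by
    intro t ht
    have := hγiso d ⟨hd0.le, le_refl d⟩ t ht
    rw [hγd] at this
    rw [this, abs_of_nonneg (by linarith [ht.2])]
  -- the midpoint of γ is not a cut point, extract the piece P
  have hmid : ∃ P ∈ 𝒞, ∃ s u : ℝ, 0 ≤ s ∧ s < d/2 ∧ d/2 < u ∧ u ≤ d ∧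
      γ '' Set.Icc s u = (γ '' Set.Icc (0:ℝ) d) ∩ P := by
    by_contra hcon
    refine hnomid (γ (d/2)) ⟨d/2, ⟨by linarith, by linarith⟩, rfl, hcon⟩ ?_
    rw [hdx (d/2) ⟨by linarith, by linarith⟩, hdy (d/2) ⟨by linarith, by linarith⟩]
    ring
  obtain ⟨P, hP, s, u, hs0, hs, hu, hud, hPeq⟩ := hmid
  have hsu : s < u := hs.trans hu
  have hcuts := endpoint_mem_cutp htg hγiso hP hs0 hsu hud hPeq
  have hcs : γ s ∈ cutpSet 𝒞 γ d := hcuts.1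
  have hcu : γ u ∈ cutpSet 𝒞 γ d := hcuts.2
  -- a ∈ P
  obtain ⟨ta, hta, hgta, hnota⟩ := ha
  have hxa : dist x a = ta := by rw [← hgta]; exact hdx ta hta
  have hsta : s ≤ ta := by
    have := ha3 (γ s) hcs (by rw [hdx s ⟨hs0, by linarith⟩]; linarith)
    rw [hdx s ⟨hs0, by linarith⟩, hxa] at this
    exact this
  have htau : ta ≤ u := by rw [hxa] at ha2; linarith
  have haP : a ∈ P := by
    have : γ ta ∈ γ '' Set.Icc s u := ⟨ta, ⟨hsta, htau⟩, rfl⟩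
    rw [hPeq] at this
    rw [← hgta]
    exact this.2
  -- b ∈ P
  obtain ⟨tb, htb, hgtb, hnotb⟩ := hb
  have hyb : dist y b = d - tb := by rw [← hgtb]; exact hdy tb htb
  have htbu : tb ≤ u := by
    have := hb3 (γ u) hcu (by rw [hdy u ⟨by linarith, hud⟩]; linarith)
    rw [hdy u ⟨by linarith, hud⟩, hyb] at this
    linarith
  have hstb : s ≤ tb := by rw [hyb] at hb2; linarith
  have hbP : b ∈ P := by
    have : γ tb ∈ γ '' Set.Icc s u := ⟨tb, ⟨hstb, htbu⟩, rfl⟩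
    rw [hPeq] at this
    rw [← hgtb]
    exact this.2
  -- a ≠ b
  have hta2 : ta < d/2 := by
    have h := hnomid a ⟨ta, hta, hgta, hnota⟩
    rw [hxa, ← hgta, hdy ta hta] at h
    rw [hxa] at ha2
    rcases lt_or_eq_of_le ha2 with h' | h'
    · exact h'
    · exfalso; apply h; rw [h']; ring_nf
  have htb2 : d/2 < tb := by
    have h := hnomid b ⟨tb, htb, hgtb, hnotb⟩
    rw [← hgtb, hdx tb htb, hdy tb htb] at h
    rw [hyb] at hb2
    rcases lt_or_eq_of_le (show d/2 ≤ tb by linarith) with h' | h'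
    · exact h'
    · exfalso; apply h; rw [← h']; ring_nf
  have hab : a ≠ b := by
    intro h
    rw [← hgta, ← hgtb] at h
    have := iso_inj hγiso hta htb h
    linarith
  refine ⟨P, hP, haP, hbP, ?_, ?_⟩
  · intro Q hQ haQ hbQ
    by_contra hQP
    have := htg.t1 P hP Q hQ (fun h => hQP h.symm) ⟨haP, haQ⟩ ⟨hbP, hbQ⟩
    exact hab this
  · intro m hm1 hm2
    by_cases hmγ : m = γ (d/2)
    · rw [hmγ]
      have : γ (d/2) ∈ γ '' Set.Icc s u := ⟨d/2, ⟨hs.le, hu.le⟩, rfl⟩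
      rw [hPeq] at this; exact this.2
    · obtain ⟨δ, ⟨hδ0, hδd, hδiso⟩, hδm⟩ :=
        exists_geodesic_through_mid hgeo x y m hxy hm1 hm2
      rw [← hdd] at hδd hδiso hδm
      have hδx : ∀ t ∈ Set.Icc (0:ℝ) d, dist x (δ t) = t := by
        intro t ht
        have := hδiso 0 ⟨le_refl 0, hd0.le⟩ t ht
        rw [hδ0] at this
        rw [this, zero_sub, abs_neg, abs_of_nonneg ht.1]
      have hsync : ∀ t ∈ Set.Icc (0:ℝ) d, ∀ t' ∈ Set.Icc (0:ℝ) d,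
          γ t = δ t' → t = t' := by
        intro t ht t' ht' h
        have h1 := hdx t ht
        have h2 := hδx t' ht'
        rw [h] at h1
        linarith [h1, h2]
      -- the last coincidence point before the midpoint
      set S : Set ℝ := {t : ℝ | t ∈ Set.Icc (0:ℝ) (d/2) ∧ γ t = δ t} with hSdef
      have hS0 : (0:ℝ) ∈ S := ⟨⟨le_refl 0, by linarith⟩, by rw [hγ0, hδ0]⟩
      have hSne : S.Nonempty := ⟨0, hS0⟩
      have hSbdd : BddAbove S := ⟨d/2, fun t ht => ht.1.2⟩
      set s₀ := sSup S with hs₀def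
      have hs₀0 : 0 ≤ s₀ := le_csSup hSbdd hS0
      have hs₀le : s₀ ≤ d/2 := csSup_le hSne (fun t ht => ht.1.2)
      have hs₀eq : γ s₀ = δ s₀ := by
        by_contra hne
        have hpos : 0 < dist (γ s₀) (δ s₀) := dist_pos.mpr hne
        obtain ⟨t, htS, htlt⟩ := exists_lt_of_lt_csSup hSne
          (show s₀ - dist (γ s₀) (δ s₀) / 4 < s₀ by linarith)
        have htle : t ≤ s₀ := le_csSup hSbdd htS
        have h1 : dist (γ s₀) (γ t) = |s₀ - t| :=
          hγiso s₀ ⟨hs₀0, by linarith⟩ t ⟨htS.1.1, by linarith [htS.1.2]⟩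
        have h4 : dist (γ t) (δ s₀) = |t - s₀| := by
          rw [htS.2]
          exact hδiso t ⟨htS.1.1, by linarith [htS.1.2]⟩ s₀ ⟨hs₀0, by linarith⟩
        have h3 := dist_triangle (γ s₀) (γ t) (δ s₀)
        rw [abs_of_nonneg (by linarith)] at h1
        rw [abs_of_nonpos (by linarith)] at h4
        linarith [h3]
      have hs₀lt : s₀ < d/2 := by
        rcases lt_or_eq_of_le hs₀le with h | h
        · exact h
        · exfalso; apply hmγ
          rw [← hδm, ← h]; exact hs₀eq.symm
      have hs₀max : ∀ t, 0 ≤ t → t ≤ d/2 → γ t = δ t → t ≤ s₀ :=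
        fun t h1 h2 h3 => le_csSup hSbdd ⟨⟨h1, h2⟩, h3⟩
      -- the first coincidence point after the midpoint
      set U : Set ℝ := {t : ℝ | t ∈ Set.Icc (d/2) d ∧ γ t = δ t} with hUdef
      have hUd : d ∈ U := ⟨⟨by linarith, le_refl d⟩, by rw [hγd, hδd]⟩
      have hUne : U.Nonempty := ⟨d, hUd⟩
      have hUbdd : BddBelow U := ⟨d/2, fun t ht => ht.1.1⟩
      set u₀ := sInf U with hu₀def
      have hu₀ge : d/2 ≤ u₀ := le_csInf hUne (fun t ht => ht.1.1)
      have hu₀le : u₀ ≤ d := csInf_le hUbdd hUd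
      have hu₀eq : γ u₀ = δ u₀ := by
        by_contra hne
        have hpos : 0 < dist (γ u₀) (δ u₀) := dist_pos.mpr hne
        obtain ⟨t, htU, htlt⟩ := exists_lt_of_csInf_lt hUne
          (show u₀ < u₀ + dist (γ u₀) (δ u₀) / 4 by linarith)
        have htge : u₀ ≤ t := csInf_le hUbdd htU
        have h1 : dist (γ u₀) (γ t) = |u₀ - t| :=
          hγiso u₀ ⟨by linarith, hu₀le⟩ t ⟨by linarith [htU.1.1], htU.1.2⟩
        have h4 : dist (γ t) (δ u₀) = |t - u₀| := by
          rw [htU.2]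
          exact hδiso t ⟨by linarith [htU.1.1], htU.1.2⟩ u₀ ⟨by linarith, hu₀le⟩
        have h3 := dist_triangle (γ u₀) (γ t) (δ u₀)
        rw [abs_of_nonpos (by linarith)] at h1
        rw [abs_of_nonneg (by linarith)] at h4
        linarith [h3]
      have hu₀gt : d/2 < u₀ := by
        rcases lt_or_eq_of_le hu₀ge with h | h
        · exact h
        · exfalso; apply hmγ
          rw [← hδm, h]; exact hu₀eq.symm
      have hu₀min : ∀ t, d/2 ≤ t → t ≤ d → γ t = δ t → u₀ ≤ t :=
        fun t h1 h2 h3 => csInf_le hUbdd ⟨⟨h1, h2⟩, h3⟩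
      -- the simple geodesic triangle with vertices γ s₀, γ u₀, m
      obtain ⟨hA, hAim⟩ := sub_forward hγiso hs₀0 (by linarith : s₀ ≤ u₀) hu₀le
      obtain ⟨hB, hBim⟩ := sub_backward hδiso (show (0:ℝ) ≤ d/2 by linarith) hu₀ge hu₀le
      obtain ⟨hC, hCim⟩ := sub_backward hδiso hs₀0 hs₀le (by linarith : d/2 ≤ d)
      rw [hδm, ← hu₀eq] at hB hBim
      rw [hδm, ← hs₀eq] at hC hCim
      have hpq : γ s₀ ≠ γ u₀ := by
        intro h
        have := iso_inj hγiso ⟨hs₀0, by linarith⟩ ⟨by linarith, hu₀le⟩ h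
        linarith
      have hqm : γ u₀ ≠ m := by
        intro h
        rw [hu₀eq, ← hδm] at h
        have := iso_inj hδiso ⟨by linarith, hu₀le⟩ ⟨by linarith, by linarith⟩ h
        linarith
      have hmp : m ≠ γ s₀ := by
        intro h
        rw [← hδm, hs₀eq] at h
        have := iso_inj hδiso ⟨by linarith, by linarith⟩ ⟨hs₀0, by linarith⟩ h
        linarith
      have hI1 : γ '' Set.Icc s₀ u₀ ∩ δ '' Set.Icc (d/2) u₀ = {γ u₀} := by
        apply Set.eq_singleton_iff_unique_mem.mpr
        constructor
        · exact ⟨⟨u₀, ⟨by linarith, le_refl u₀⟩, rfl⟩,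
            ⟨u₀, ⟨by linarith, le_refl u₀⟩, hu₀eq.symm⟩⟩
        · rintro z ⟨⟨t, ht, rfl⟩, ⟨t', ht', hteq⟩⟩
          have htd : t ∈ Set.Icc (0:ℝ) d := ⟨by linarith [ht.1], by linarith [ht.2]⟩
          have ht'd : t' ∈ Set.Icc (0:ℝ) d := ⟨by linarith [ht'.1], by linarith [ht'.2]⟩
          have htt' : t = t' := hsync t htd t' ht'd hteq.symm
          subst htt'
          have hge := hu₀min t (by linarith [ht'.1]) htd.2 hteq.symm
          have heqt : t = u₀ := le_antisymm ht.2 hge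
          rw [heqt]
      have hI2 : δ '' Set.Icc (d/2) u₀ ∩ δ '' Set.Icc s₀ (d/2) = {m} := by
        apply Set.eq_singleton_iff_unique_mem.mpr
        constructor
        · exact ⟨⟨d/2, ⟨le_refl _, hu₀gt.le⟩, hδm⟩, ⟨d/2, ⟨hs₀lt.le, le_refl _⟩, hδm⟩⟩
        · rintro z ⟨⟨t, ht, rfl⟩, ⟨t', ht', hteq⟩⟩
          have htd : t ∈ Set.Icc (0:ℝ) d := ⟨by linarith [ht.1], by linarith [ht.2]⟩
          have ht'd : t' ∈ Set.Icc (0:ℝ) d := ⟨by linarith [ht'.1], by linarith [ht'.2]⟩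
          have htt' : t' = t := iso_inj hδiso ht'd htd hteq
          subst htt'
          have heqt : t' = d/2 := le_antisymm ht'.2 ht.1
          rw [heqt]
          exact hδm
      have hI3 : δ '' Set.Icc s₀ (d/2) ∩ γ '' Set.Icc s₀ u₀ = {γ s₀} := by
        apply Set.eq_singleton_iff_unique_mem.mpr
        constructor
        · exact ⟨⟨s₀, ⟨le_refl _, hs₀lt.le⟩, hs₀eq.symm⟩,
            ⟨s₀, ⟨le_refl _, by linarith⟩, rfl⟩⟩
        · rintro z ⟨⟨t', ht', rfl⟩, ⟨t, ht, hteq⟩⟩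
          have htd : t ∈ Set.Icc (0:ℝ) d := ⟨by linarith [ht.1], by linarith [ht.2]⟩
          have ht'd : t' ∈ Set.Icc (0:ℝ) d := ⟨by linarith [ht'.1], by linarith [ht'.2]⟩
          have htt' : t = t' := hsync t htd t' ht'd hteq
          subst htt'
          have hle := hs₀max t ht'd.1 ht'.2 hteq
          have heqt : t = s₀ := le_antisymm hle ht'.1
          rw [heqt]
          exact hs₀eq.symm
      obtain ⟨Q, hQ, hQsub⟩ := htg.t2 (fun r => γ (s₀ + r)) (fun r => δ (u₀ - r))
        (fun r => δ (d/2 - r)) (γ s₀) (γ u₀) m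
        ⟨hpq, hqm, hmp, hA, hB, hC, by rw [hAim, hBim]; exact hI1,
          by rw [hBim, hCim]; exact hI2, by rw [hCim, hAim]; exact hI3⟩
      have hmQ : m ∈ Q := by
        apply hQsub
        apply Or.inl
        apply Or.inr
        rw [hBim]
        exact ⟨d/2, ⟨le_refl _, hu₀gt.le⟩, hδm⟩
      have hγQ : γ '' Set.Icc s₀ u₀ ⊆ Q := by
        intro z hz
        apply hQsub
        apply Or.inl
        apply Or.inl
        rw [hAim]
        exact hz
      have hQPeq : Q = P := by
        by_contra hne
        have hsub := htg.t1 P hP Q hQ (fun h => hne h.symm)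
        have hmaxlt : max s s₀ < d/2 := max_lt hs hs₀lt
        have hc1 : γ (max s s₀) ∈ P ∩ Q := by
          constructor
          · have : γ (max s s₀) ∈ γ '' Set.Icc s u :=
              ⟨max s s₀, ⟨le_max_left s s₀, by linarith⟩, rfl⟩
            rw [hPeq] at this; exact this.2
          · exact hγQ ⟨max s s₀, ⟨le_max_right s s₀, by linarith⟩, rfl⟩
        have hc2 : γ (d/2) ∈ P ∩ Q := by
          constructor
          · have : γ (d/2) ∈ γ '' Set.Icc s u := ⟨d/2, ⟨hs.le, hu.le⟩, rfl⟩
            rw [hPeq] at this; exact this.2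
          · exact hγQ ⟨d/2, ⟨by linarith, hu₀gt.le⟩, rfl⟩
        have heq2 := hsub hc1 hc2
        have := iso_inj hγiso
          ⟨le_trans hs0 (le_max_left s s₀), by linarith⟩
          ⟨by linarith, by linarith⟩ heq2
        linarith
      rw [← hQPeq]
      exact hmQ
end

section
/- Let F be a complete geodesic metric space that is tree-graded with respect to a collection 𝒫 of pieces, and let g be an isometry of F permuting the pieces such that the cyclic group ⟨g⟩ has bounded orbits in F. If x ∈ F is a point with g(x) ≠ x, then: if the pair x, g(x) has a middle cut-point m, then g(m) = m; and if the pair x, g(x) has a middle cut-piece Q, then g(Q) = Q (set-wise). -/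
/-- `m` is the middle cut-point of the pair `x, y`: if `x = y` it is `x` itself; if `x ≠ y`
it is a point of `Cutp{x,y}` equidistant from `x` and `y` (at distance `dist x y / 2`). -/
def IsMiddleCutPoint {X : Type*} [MetricSpace X] (𝒞 : Set (Set X)) (x y m : X) : Prop :=
  (x = y ∧ m = x) ∨
  (x ≠ y ∧ ∃ γ : ℝ → X, IsGeodesicFrom γ x y ∧
    m ∈ cutpSet 𝒞 γ (dist x y) ∧ dist x m = dist x y / 2 ∧ dist y m = dist x y / 2)

/-- `Q` is the middle cut-piece of the pair `x, y`: when `x ≠ y` and no point of `Cutp{x,y}` is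
equidistant from `x` and `y`, it is the (unique) piece containing the point `a` of `Cutp{x,y}`
farthest from `x` with `dist x a ≤ dist x y / 2` and the point `b` of `Cutp{x,y}` farthest
from `y` with `dist y b ≤ dist x y / 2`. -/
def IsMiddleCutPiece {X : Type*} [MetricSpace X] (𝒞 : Set (Set X)) (x y : X)
    (Q : Set X) : Prop :=
  x ≠ y ∧ Q ∈ 𝒞 ∧
  ∃ γ : ℝ → X, IsGeodesicFrom γ x y ∧
    (∀ p ∈ cutpSet 𝒞 γ (dist x y), dist x p ≠ dist y p) ∧
    ∃ a ∈ cutpSet 𝒞 γ (dist x y), ∃ b ∈ cutpSet 𝒞 γ (dist x y),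
      a ∈ Q ∧ b ∈ Q ∧
      dist x a ≤ dist x y / 2 ∧
      (∀ p ∈ cutpSet 𝒞 γ (dist x y), dist x p ≤ dist x y / 2 → dist x p ≤ dist x a) ∧
      dist y b ≤ dist x y / 2 ∧
      (∀ p ∈ cutpSet 𝒞 γ (dist x y), dist y p ≤ dist x y / 2 → dist y p ≤ dist y b)

open Set Relation

section

variable {X : Type*} [MetricSpace X]

lemma dist_eq_add_of_between {u p z q v : X} (huv : dist u v = dist u z + dist z v)
    (hp : dist u p + dist p z = dist u z) (hq : dist z q + dist q v = dist z v) :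
    dist p q = dist p z + dist z q := by
  have := dist_triangle4 u p q v
  have := dist_triangle p z q
  linarith

def IsGeodesicSegment (S : Set X) (u v : X) : Prop :=
  ∃ γ : ℝ → X, IsGeodesicFrom γ u v ∧ γ '' Icc 0 (dist u v) = S

lemma exists_isGeodesicSegment (hgeo : IsGeodesicSpace X) (u v : X) :
    ∃ S, IsGeodesicSegment S u v :=
  let ⟨γ, hγ⟩ := hgeo u v
  ⟨_, γ, hγ, rfl⟩

namespace IsGeodesicFrom

variable {γ : ℝ → X} {x y : X} {s t : ℝ}

lemma dist_apply (h : IsGeodesicFrom γ x y) (hs : s ∈ Icc 0 (dist x y))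
    (ht : t ∈ Icc 0 (dist x y)) : dist (γ s) (γ t) = |s - t| :=
  h.2.2 s hs t ht

lemma dist_left_apply (h : IsGeodesicFrom γ x y) (hs : s ∈ Icc 0 (dist x y)) :
    dist x (γ s) = s := by
  simpa [h.1, abs_of_nonneg hs.1] using h.dist_apply ⟨le_rfl, dist_nonneg⟩ hs

lemma dist_apply_right (h : IsGeodesicFrom γ x y) (hs : s ∈ Icc 0 (dist x y)) :
    dist (γ s) y = dist x y - s := by
  simpa [h.2.1, abs_of_nonpos (sub_nonpos.2 hs.2)] using
    h.dist_apply hs ⟨dist_nonneg, le_rfl⟩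

lemma injOn (h : IsGeodesicFrom γ x y) : InjOn γ (Icc 0 (dist x y)) := fun s hs t ht hst => by
  rw [← h.dist_left_apply hs, ← h.dist_left_apply ht, hst]

lemma continuousOn (h : IsGeodesicFrom γ x y) : ContinuousOn γ (Icc 0 (dist x y)) :=
  LipschitzOnWith.continuousOn (K := 1) <| LipschitzOnWith.of_dist_le_mul fun s hs t ht => by
    simp [h.dist_apply hs ht, Real.dist_eq]

lemma isGeodesicSegment_image (h : IsGeodesicFrom γ x y) (hs : s ∈ Icc 0 (dist x y))
    (ht : t ∈ Icc 0 (dist x y)) (hst : s ≤ t) :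
    IsGeodesicSegment (γ '' Icc s t) (γ s) (γ t) := by
  have hd : dist (γ s) (γ t) = t - s := by
    rw [h.dist_apply hs ht, abs_of_nonpos (by linarith)]; ring
  refine ⟨fun r => γ (s + r), ⟨by simp, by simp [hd], fun r hr r' hr' => ?_⟩, ?_⟩
  · rw [hd] at hr hr'
    rw [h.dist_apply ⟨by linarith [hr.1, hs.1], by linarith [hr.2, ht.2]⟩
      ⟨by linarith [hr'.1, hs.1], by linarith [hr'.2, ht.2]⟩]
    ring_nf
  · rw [hd, ← image_image γ (s + ·), image_const_add_Icc]
    ring_nf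

lemma isGeodesicSegment (h : IsGeodesicFrom γ x y) :
    IsGeodesicSegment (γ '' Icc 0 (dist x y)) x y :=
  ⟨γ, h, rfl⟩

end IsGeodesicFrom

namespace IsGeodesicSegment

variable {S T : Set X} {u v m p q : X}

lemma left_mem (h : IsGeodesicSegment S u v) : u ∈ S := by
  obtain ⟨γ, hγ, rfl⟩ := h
  exact ⟨0, ⟨le_rfl, dist_nonneg⟩, hγ.1⟩

lemma symm (h : IsGeodesicSegment S u v) : IsGeodesicSegment S v u := by
  obtain ⟨γ, hγ, rfl⟩ := h
  refine ⟨fun r => γ (dist u v - r), ⟨by simp [hγ.2.1], by simp [dist_comm, hγ.1],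
    fun r hr r' hr' => ?_⟩, ?_⟩
  · rw [dist_comm] at hr hr'
    rw [hγ.dist_apply ⟨by linarith [hr.2], by linarith [hr.1]⟩
      ⟨by linarith [hr'.2], by linarith [hr'.1]⟩, abs_sub_comm]
    ring_nf
  · rw [dist_comm v u, ← image_image γ (dist u v - ·), image_const_sub_Icc]
    simp

lemma right_mem (h : IsGeodesicSegment S u v) : v ∈ S :=
  h.symm.left_mem

lemma isCompact (h : IsGeodesicSegment S u v) : IsCompact S := by
  obtain ⟨γ, hγ, rfl⟩ := h
  exact isCompact_Icc.image_of_continuousOn hγ.continuousOn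

lemma dist_add_of_mem (h : IsGeodesicSegment S u v) (hp : p ∈ S) :
    dist u p + dist p v = dist u v := by
  obtain ⟨γ, hγ, rfl⟩ := h
  obtain ⟨t, ht, rfl⟩ := hp
  rw [hγ.dist_left_apply ht, hγ.dist_apply_right ht]
  ring

lemma map (h : IsGeodesicSegment S u v) (φ : X ≃ᵢ X) : IsGeodesicSegment (φ '' S) (φ u) (φ v) := by
  obtain ⟨γ, hγ, rfl⟩ := h
  refine ⟨fun r => φ (γ r), ⟨by simp [hγ.1], by simp [φ.dist_eq, hγ.2.1],
    fun r hr r' hr' => ?_⟩, ?_⟩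
  · rw [φ.dist_eq] at hr hr'
    simp only [φ.dist_eq, hγ.dist_apply hr hr']
  · rw [φ.dist_eq, image_image]

lemma exists_subsegment (h : IsGeodesicSegment S u v) (hp : p ∈ S) (hq : q ∈ S) :
    ∃ T ⊆ S, IsGeodesicSegment T p q := by
  obtain ⟨γ, hγ, rfl⟩ := h
  obtain ⟨s, hs, rfl⟩ := hp
  obtain ⟨t, ht, rfl⟩ := hq
  have hsub : ∀ {a b}, a ∈ Icc 0 (dist u v) → b ∈ Icc 0 (dist u v) →
      γ '' Icc a b ⊆ γ '' Icc 0 (dist u v) := fun ha hb =>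
    image_mono (Icc_subset_Icc ha.1 hb.2)
  rcases le_total s t with hst | hts
  · exact ⟨_, hsub hs ht, hγ.isGeodesicSegment_image hs ht hst⟩
  · exact ⟨_, hsub ht hs, (hγ.isGeodesicSegment_image ht hs hts).symm⟩

lemma union (hS : IsGeodesicSegment S u m) (hT : IsGeodesicSegment T m v)
    (h : dist u v = dist u m + dist m v) : IsGeodesicSegment (S ∪ T) u v := by
  obtain ⟨γ₁, hγ₁, rfl⟩ := hS
  obtain ⟨γ₂, hγ₂, rfl⟩ := hT
  set d₁ := dist u m
  set γ : ℝ → X := fun r => if r ≤ d₁ then γ₁ r else γ₂ (r - d₁)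
  have h₁ : ∀ r ≤ d₁, γ r = γ₁ r := fun r hr => if_pos hr
  have h₂ : ∀ r, d₁ ≤ r → γ r = γ₂ (r - d₁) := by
    intro r hr
    rcases hr.lt_or_eq with hr | rfl
    · exact if_neg (not_le.2 hr)
    · rw [h₁ _ le_rfl, sub_self, hγ₂.1]; exact hγ₁.2.1
  have key : ∀ r ∈ Icc 0 (dist u v), ∀ r' ∈ Icc 0 (dist u v), r ≤ r' →
      dist (γ r) (γ r') = r' - r := by
    intro r hr r' hr' hrr'
    rw [h] at hr hr'
    rcases le_total r' d₁ with hr'₁ | hr'₁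
    · rw [h₁ r (hrr'.trans hr'₁), h₁ r' hr'₁, hγ₁.dist_apply ⟨hr.1, hrr'.trans hr'₁⟩ ⟨hr'.1, hr'₁⟩,
        abs_of_nonpos (by linarith)]
      ring
    rcases le_total r d₁ with hr₁ | hr₁
    · have hs : r ∈ Icc 0 d₁ := ⟨hr.1, hr₁⟩
      have ht : r' - d₁ ∈ Icc 0 (dist m v) := ⟨by linarith, by linarith [hr'.2]⟩
      rw [h₁ r hr₁, h₂ r' hr'₁, dist_eq_add_of_between h
        (hγ₁.isGeodesicSegment.dist_add_of_mem ⟨r, hs, rfl⟩)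
        (hγ₂.isGeodesicSegment.dist_add_of_mem ⟨r' - d₁, ht, rfl⟩),
        hγ₁.dist_apply_right hs, hγ₂.dist_left_apply ht]
      ring
    · rw [h₂ r hr₁, h₂ r' hr'₁, hγ₂.dist_apply ⟨by linarith, by linarith [hrr', hr'.2]⟩
        ⟨by linarith, by linarith [hr'.2]⟩, abs_of_nonpos (by linarith)]
      ring
  refine ⟨γ, ⟨h₁ 0 dist_nonneg ▸ hγ₁.1, ?_, fun r hr r' hr' => ?_⟩, ?_⟩
  · rw [h₂ _ (by rw [h]; linarith [dist_nonneg (x := m) (y := v)]), h, add_sub_cancel_left,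
      hγ₂.2.1]
  · rcases le_total r r' with hrr' | hrr'
    · rw [key r hr r' hr' hrr', abs_of_nonpos (by linarith)]; ring
    · rw [dist_comm, key r' hr' r hr hrr', abs_of_nonneg (by linarith)]
  · ext z
    constructor
    · rintro ⟨r, hr, rfl⟩
      rw [h] at hr
      rcases le_total r d₁ with hr₁ | hr₁
      · exact Or.inl ⟨r, ⟨hr.1, hr₁⟩, (h₁ r hr₁).symm⟩
      · exact Or.inr ⟨r - d₁, ⟨by linarith, by linarith [hr.2]⟩, (h₂ r hr₁).symm⟩
    · rintro (⟨r, hr, rfl⟩ | ⟨r, hr, rfl⟩)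
      · exact ⟨r, ⟨hr.1, by rw [h]; linarith [hr.2, dist_nonneg (x := m) (y := v)]⟩, h₁ r hr.2⟩
      · refine ⟨d₁ + r, ⟨by linarith [hr.1, dist_nonneg (x := u) (y := m)],
          by rw [h]; linarith [hr.2]⟩, ?_⟩
        rw [h₂ _ (by linarith [hr.1]), add_sub_cancel_left]

lemma exists_last_mem {K : Set X} (h : IsGeodesicSegment S u v) (hK : IsClosed K) (hu : u ∈ K) :
    ∃ p ∈ K, ∃ T ⊆ S, IsGeodesicSegment T p v ∧ T ∩ K ⊆ {p} := by
  obtain ⟨γ, hγ, rfl⟩ := h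
  set R := Icc 0 (dist u v) ∩ γ ⁻¹' K
  have hR : IsClosed R := hγ.continuousOn.preimage_isClosed_of_isClosed isClosed_Icc hK
  have hbdd : BddAbove R := ⟨dist u v, fun r hr => hr.1.2⟩
  have hmem : sSup R ∈ R :=
    hR.csSup_mem ⟨0, ⟨le_rfl, dist_nonneg⟩, by simpa [hγ.1] using hu⟩ hbdd
  have hend : dist u v ∈ Icc 0 (dist u v) := ⟨dist_nonneg, le_rfl⟩
  refine ⟨_, hmem.2, _, image_mono (Icc_subset_Icc hmem.1.1 le_rfl), ?_, ?_⟩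
  · simpa [hγ.2.1] using hγ.isGeodesicSegment_image hmem.1 hend hmem.1.2
  · rintro _ ⟨⟨r, hr, rfl⟩, hrK⟩
    rw [mem_singleton_iff, le_antisymm (le_csSup hbdd ⟨⟨hmem.1.1.trans hr.1, hr.2⟩, hrK⟩) hr.1]

lemma exists_first_mem {K : Set X} (h : IsGeodesicSegment S u v) (hK : IsClosed K) (hv : v ∈ K) :
    ∃ q ∈ K, ∃ T ⊆ S, IsGeodesicSegment T u q ∧ T ∩ K ⊆ {q} :=
  let ⟨q, hq, T, hTS, hT, hTK⟩ := h.symm.exists_last_mem hK hv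
  ⟨q, hq, T, hTS, hT.symm, hTK⟩

end IsGeodesicSegment

namespace IsTreeGraded

variable {𝒞 : Set (Set X)} {P Q S T : Set X} {u v p q z : X}

lemma eq_of_mem_of_mem (htg : IsTreeGraded X 𝒞) (hP : P ∈ 𝒞) (hQ : Q ∈ 𝒞) (hpq : p ≠ q)
    (hpP : p ∈ P) (hpQ : p ∈ Q) (hqP : q ∈ P) (hqQ : q ∈ Q) : P = Q :=
  by_contra fun h => hpq (htg.t1 P hP Q hQ h ⟨hpP, hpQ⟩ ⟨hqP, hqQ⟩)

lemma exists_piece_of_triangle (htg : IsTreeGraded X 𝒞) {S₁ S₂ S₃ : Set X} {x y z : X}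
    (h₁ : IsGeodesicSegment S₁ x y) (h₂ : IsGeodesicSegment S₂ y z)
    (h₃ : IsGeodesicSegment S₃ z x) (hxy : x ≠ y) (hyz : y ≠ z) (hzx : z ≠ x)
    (h₁₂ : S₁ ∩ S₂ ⊆ {y}) (h₂₃ : S₂ ∩ S₃ ⊆ {z}) (h₃₁ : S₃ ∩ S₁ ⊆ {x}) :
    ∃ P ∈ 𝒞, S₁ ∪ S₂ ∪ S₃ ⊆ P := by
  have e₁₂ := h₁₂.antisymm (singleton_subset_iff.2 ⟨h₁.right_mem, h₂.left_mem⟩)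
  have e₂₃ := h₂₃.antisymm (singleton_subset_iff.2 ⟨h₂.right_mem, h₃.left_mem⟩)
  have e₃₁ := h₃₁.antisymm (singleton_subset_iff.2 ⟨h₃.right_mem, h₁.left_mem⟩)
  obtain ⟨γ₁, hγ₁, rfl⟩ := h₁
  obtain ⟨γ₂, hγ₂, rfl⟩ := h₂
  obtain ⟨γ₃, hγ₃, rfl⟩ := h₃
  exact htg.t2 γ₁ γ₂ γ₃ x y z ⟨hxy, hyz, hzx, hγ₁, hγ₂, hγ₃, e₁₂, e₂₃, e₃₁⟩

/-- Splitting `S` at its midpoint turns the bigon into a simple triangle. -/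
lemma exists_piece_of_bigon (htg : IsTreeGraded X 𝒞) (hS : IsGeodesicSegment S u v)
    (hT : IsGeodesicSegment T u v) (huv : u ≠ v) (hST : S ∩ T ⊆ {u, v}) :
    ∃ P ∈ 𝒞, S ∪ T ⊆ P := by
  obtain ⟨γ, hγ, rfl⟩ := hS
  set d := dist u v
  have hd : 0 < d := dist_pos.2 huv
  have hmid : d / 2 ∈ Icc 0 d := ⟨by linarith, by linarith⟩
  have h0 : (0 : ℝ) ∈ Icc 0 d := ⟨le_rfl, hd.le⟩
  have hd' : d ∈ Icc 0 d := ⟨hd.le, le_rfl⟩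
  have h₁ := hγ.isGeodesicSegment_image h0 hmid hmid.1
  have h₂ := hγ.isGeodesicSegment_image hmid hd' hmid.2
  rw [hγ.1] at h₁
  rw [hγ.2.1] at h₂
  have hsplit : γ '' Icc 0 d = γ '' Icc 0 (d / 2) ∪ γ '' Icc (d / 2) d := by
    rw [← image_union, Icc_union_Icc_eq_Icc hmid.1 hmid.2]
  have h₁₂ : γ '' Icc 0 (d / 2) ∩ γ '' Icc (d / 2) d ⊆ {γ (d / 2)} := by
    rintro _ ⟨⟨r, hr, rfl⟩, ⟨r', hr', he⟩⟩
    have := hγ.injOn ⟨hr.1, hr.2.trans hmid.2⟩ ⟨hmid.1.trans hr'.1, hr'.2⟩ he.symm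
    rw [mem_singleton_iff, le_antisymm hr.2 (this ▸ hr'.1)]
  have h₂₃ : γ '' Icc (d / 2) d ∩ T ⊆ {v} := by
    rintro _ ⟨⟨r, hr, rfl⟩, hrT⟩
    rcases hST ⟨⟨r, ⟨hmid.1.trans hr.1, hr.2⟩, rfl⟩, hrT⟩ with h | h
    · linarith [hr.1, hγ.injOn ⟨hmid.1.trans hr.1, hr.2⟩ h0 (h.trans hγ.1.symm)]
    · exact h
  have h₃₁ : T ∩ γ '' Icc 0 (d / 2) ⊆ {u} := by
    rintro _ ⟨hrT, ⟨r, hr, rfl⟩⟩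
    rcases hST ⟨⟨r, ⟨hr.1, hr.2.trans hmid.2⟩, rfl⟩, hrT⟩ with h | h
    · exact h
    · linarith [hr.2, hγ.injOn ⟨hr.1, hr.2.trans hmid.2⟩ hd' (h.trans hγ.2.1.symm)]
  obtain ⟨P, hP, hsub⟩ := htg.exists_piece_of_triangle h₁ h₂ hT.symm
    (fun h => by linarith [hγ.injOn h0 hmid (hγ.1.trans h)])
    (fun h => by linarith [hγ.injOn hmid hd' (h.trans hγ.2.1.symm)]) huv.symm h₁₂ h₂₃ h₃₁
  exact ⟨P, hP, hsplit ▸ hsub⟩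

lemma exists_piece_of_not_mem (htg : IsTreeGraded X 𝒞) (hS : IsGeodesicSegment S u v)
    (hT : IsGeodesicSegment T u v) (hz : z ∈ S) (hzT : z ∉ T) :
    ∃ P ∈ 𝒞, z ∈ P ∧ ∃ w₁ ∈ T, ∃ w₂ ∈ T, w₁ ≠ w₂ ∧ w₁ ∈ P ∧ w₂ ∈ P := by
  obtain ⟨Sa, -, hSa⟩ := hS.exists_subsegment hS.left_mem hz
  obtain ⟨Sb, -, hSb⟩ := hS.exists_subsegment hz hS.right_mem
  obtain ⟨w₁, hw₁, T₁, hT₁Sa, hT₁, hT₁T⟩ := hSa.exists_last_mem hT.isCompact.isClosed hT.left_mem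
  obtain ⟨w₂, hw₂, T₂, hT₂Sb, hT₂, hT₂T⟩ :=
    hSb.exists_first_mem hT.isCompact.isClosed hT.right_mem
  have hw₁z : w₁ ≠ z := fun h => hzT (h ▸ hw₁)
  have hd : dist w₁ w₂ = dist w₁ z + dist z w₂ :=
    dist_eq_add_of_between (hS.dist_add_of_mem hz).symm
      (hSa.dist_add_of_mem (hT₁Sa hT₁.left_mem)) (hSb.dist_add_of_mem (hT₂Sb hT₂.right_mem))
  have hw₁₂ : w₁ ≠ w₂ := by
    rintro rfl
    linarith [dist_pos.2 hw₁z, dist_nonneg (x := z) (y := w₁), dist_self w₁]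
  obtain ⟨V, hVT, hV⟩ := hT.exists_subsegment hw₁ hw₂
  obtain ⟨P, hP, hsub⟩ := htg.exists_piece_of_bigon (hT₁.union hT₂ hd) hV hw₁₂ (by
    rintro x ⟨hx | hx, hxV⟩
    · exact Or.inl (hT₁T ⟨hx, hVT hxV⟩)
    · exact Or.inr (hT₂T ⟨hx, hVT hxV⟩))
  exact ⟨P, hP, hsub (Or.inl (Or.inl hT₁.right_mem)), w₁, hw₁, w₂, hw₂, hw₁₂,
    hsub (Or.inr hV.left_mem), hsub (Or.inr hV.right_mem)⟩

lemma subset_of_isGeodesicSegment (htg : IsTreeGraded X 𝒞) (hP : P ∈ 𝒞)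
    (hS : IsGeodesicSegment S p q) (hp : p ∈ P) (hq : q ∈ P) : S ⊆ P := by
  obtain ⟨γ, hγ, hγP⟩ := htg.geodesic P hP p hp q hq
  intro z hz
  by_cases hzT : z ∈ γ '' Icc 0 (dist p q)
  · exact hγP hzT
  obtain ⟨P', hP', hzP', w₁, hw₁, w₂, hw₂, hw₁₂, hw₁P', hw₂P'⟩ :=
    htg.exists_piece_of_not_mem hS hγ.isGeodesicSegment hz hzT
  rwa [htg.eq_of_mem_of_mem hP' hP hw₁₂ hw₁P' (hγP hw₁) hw₂P' (hγP hw₂)] at hzP'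

lemma apply_mem_of_mem (htg : IsTreeGraded X 𝒞) (hP : P ∈ 𝒞) {γ : ℝ → X} {x y : X}
    (hγ : IsGeodesicFrom γ x y) {s t r : ℝ} (hs : s ∈ Icc 0 (dist x y))
    (ht : t ∈ Icc 0 (dist x y)) (hsP : γ s ∈ P) (htP : γ t ∈ P) (hr : r ∈ Icc s t) :
    γ r ∈ P :=
  htg.subset_of_isGeodesicSegment hP (hγ.isGeodesicSegment_image hs ht (hr.1.trans hr.2))
    hsP htP ⟨r, hr, rfl⟩

lemma exists_trace (htg : IsTreeGraded X 𝒞) (hP : P ∈ 𝒞) {γ : ℝ → X} {x y : X}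
    (hγ : IsGeodesicFrom γ x y) {t : ℝ} (ht : t ∈ Icc 0 (dist x y)) (htP : γ t ∈ P) :
    ∃ α ∈ Icc 0 (dist x y), ∃ β ∈ Icc 0 (dist x y),
      ∀ r ∈ Icc 0 (dist x y), γ r ∈ P ↔ r ∈ Icc α β := by
  set R := Icc 0 (dist x y) ∩ γ ⁻¹' P
  have hR : IsClosed R :=
    hγ.continuousOn.preimage_isClosed_of_isClosed isClosed_Icc (htg.closed P hP)
  have hbdd : BddAbove R := ⟨dist x y, fun r hr => hr.1.2⟩
  have hbdd' : BddBelow R := ⟨0, fun r hr => hr.1.1⟩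
  have hα := hR.csInf_mem ⟨t, ht, htP⟩ hbdd'
  have hβ := hR.csSup_mem ⟨t, ht, htP⟩ hbdd
  refine ⟨_, hα.1, _, hβ.1, fun r hr => ⟨fun hrP => ⟨csInf_le hbdd' ⟨hr, hrP⟩,
    le_csSup hbdd ⟨hr, hrP⟩⟩, htg.apply_mem_of_mem hP hγ hα.1 hβ.1 hα.2 hβ.2⟩⟩

end IsTreeGraded

/-- The parametric form of `γ t ∈ Cutp`. -/
def NoStraddle (𝒞 : Set (Set X)) (γ : ℝ → X) (d t : ℝ) : Prop :=
  ∀ P ∈ 𝒞, ∀ s ∈ Icc 0 d, ∀ u ∈ Icc 0 d, s < t → t < u → γ s ∈ P → γ u ∈ P → False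

namespace IsTreeGraded

variable {𝒞 : Set (Set X)} {Q : Set X} {γ : ℝ → X} {x y : X} {t : ℝ}

lemma noStraddle_of_mem_cutpSet (htg : IsTreeGraded X 𝒞) (hγ : IsGeodesicFrom γ x y)
    (ht : t ∈ Icc 0 (dist x y)) (hcut : γ t ∈ cutpSet 𝒞 γ (dist x y)) :
    NoStraddle 𝒞 γ (dist x y) t := by
  intro P hP s hs u hu hst htu hsP huP
  obtain ⟨t', ht', he, hno⟩ := hcut
  obtain rfl := hγ.injOn ht' ht he
  obtain ⟨α, hα, β, hβ, htrace⟩ := htg.exists_trace hP hγ hs hsP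
  have hαs := ((htrace s hs).1 hsP).1
  have huβ := ((htrace u hu).1 huP).2
  refine hno ⟨P, hP, α, β, hα.1, by linarith, by linarith, hβ.2, ?_⟩
  ext z
  constructor
  · rintro ⟨r, hr, rfl⟩
    have hr' : r ∈ Icc 0 (dist x y) := ⟨hα.1.trans hr.1, hr.2.trans hβ.2⟩
    exact ⟨⟨r, hr', rfl⟩, (htrace r hr').2 hr⟩
  · rintro ⟨⟨r, hr, rfl⟩, hrP⟩
    exact ⟨r, (htrace r hr).1 hrP, rfl⟩

lemma noStraddle_of_trace (htg : IsTreeGraded X 𝒞) (hQ : Q ∈ 𝒞) (hγ : IsGeodesicFrom γ x y)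
    {α β : ℝ} (hα : α ∈ Icc 0 (dist x y)) (hβ : β ∈ Icc 0 (dist x y)) (hαβ : α < β)
    (htrace : ∀ r ∈ Icc 0 (dist x y), γ r ∈ Q ↔ r ∈ Icc α β) (ht : t = α ∨ t = β) :
    NoStraddle 𝒞 γ (dist x y) t := by
  intro P hP s hs u hu hst htu hsP huP
  have htαβ : α ≤ t ∧ t ≤ β := by rcases ht with rfl | rfl <;> constructor <;> linarith
  have hr₁ : max s α ∈ Icc 0 (dist x y) := ⟨le_max_of_le_right hα.1, max_le hs.2 hα.2⟩
  have hr₂ : min u β ∈ Icc 0 (dist x y) := ⟨le_min hu.1 hβ.1, min_le_of_right_le hβ.2⟩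
  have h₁₂ : max s α < min u β :=
    max_lt (lt_min (hst.trans htu) (hst.trans_le htαβ.2)) (lt_min (htαβ.1.trans_lt htu) hαβ)
  have hPQ : P = Q := htg.eq_of_mem_of_mem hP hQ (fun h => h₁₂.ne (hγ.injOn hr₁ hr₂ h))
    (htg.apply_mem_of_mem hP hγ hs hu hsP huP ⟨le_max_left _ _, h₁₂.le.trans (min_le_left _ _)⟩)
    ((htrace _ hr₁).2 ⟨le_max_right _ _, h₁₂.le.trans (min_le_right _ _)⟩)
    (htg.apply_mem_of_mem hP hγ hs hu hsP huP ⟨(le_max_left _ _).trans h₁₂.le, min_le_left _ _⟩)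
    ((htrace _ hr₂).2 ⟨(le_max_right _ _).trans h₁₂.le, min_le_right _ _⟩)
  subst hPQ
  have := ((htrace s hs).1 hsP).1
  have := ((htrace u hu).1 huP).2
  rcases ht with rfl | rfl <;> linarith

end IsTreeGraded

def JoinedAvoiding (m a b : X) : Prop :=
  ∃ S, IsGeodesicSegment S a b ∧ m ∉ S

namespace JoinedAvoiding

variable {m a b : X}

lemma symm (h : JoinedAvoiding m a b) : JoinedAvoiding m b a :=
  let ⟨S, hS, hm⟩ := h
  ⟨S, hS.symm, hm⟩

instance : Std.Symm (JoinedAvoiding m) :=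
  ⟨fun _ _ => symm⟩

lemma map (h : JoinedAvoiding m a b) (φ : X ≃ᵢ X) : JoinedAvoiding (φ m) (φ a) (φ b) :=
  let ⟨_, hS, hm⟩ := h
  ⟨_, hS.map φ, fun ⟨_, hz, he⟩ => hm (φ.injective he ▸ hz)⟩

lemma reflTransGen_map (h : ReflTransGen (JoinedAvoiding m) a b) (φ : X ≃ᵢ X) :
    ReflTransGen (JoinedAvoiding (φ m)) (φ a) (φ b) :=
  ReflTransGen.lift φ (fun _ _ h => h.map φ) _ _ h

end JoinedAvoiding

lemma joinedAvoiding_of_dist_ne (hgeo : IsGeodesicSpace X) {m a b : X}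
    (h : dist a m + dist m b ≠ dist a b) : JoinedAvoiding m a b :=
  let ⟨S, hS⟩ := exists_isGeodesicSegment hgeo a b
  ⟨S, hS, fun hm => h (hS.dist_add_of_mem hm)⟩

/-- A union of branches of `X ∖ {m}` at `m`, certified by one geodesic to `m` from each point. -/
def IsSide (𝒞 : Set (Set X)) (m : X) (A : Set X) : Prop :=
  m ∉ A ∧ ∀ p ∈ A, ∃ S, IsGeodesicSegment S p m ∧ S \ {m} ⊆ A ∧
    ∀ P ∈ 𝒞, m ∈ P → (P ∩ (S \ {m})).Nonempty → P \ {m} ⊆ A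

namespace IsTreeGraded

variable {𝒞 : Set (Set X)} {U : Set X} {m a b c p q : X}

lemma exists_piece_of_corner (htg : IsTreeGraded X 𝒞) {T₁ T₂ : Set X} {a₁ b₁ a₂ b₂ J : X}
    (hT₁ : IsGeodesicSegment T₁ a₁ b₁) (hT₂ : IsGeodesicSegment T₂ a₂ b₂) (hJ₁ : J ∈ T₁)
    (hJ₂ : J ∈ T₂) (h₁₂ : T₁ ∩ T₂ ⊆ {J}) (hU : IsGeodesicSegment U p q) (hpq : p ≠ q)
    (hp₁ : p ∈ T₁) (hp₂ : p ∉ T₂) (hq₂ : q ∈ T₂) (hq₁ : q ∉ T₁)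
    (hUT : U ∩ (T₁ ∪ T₂) ⊆ {p, q}) : ∃ P ∈ 𝒞, U ⊆ P := by
  obtain ⟨V₂, hV₂T₂, hV₂⟩ := hT₂.exists_subsegment hq₂ hJ₂
  obtain ⟨V₁, hV₁T₁, hV₁⟩ := hT₁.exists_subsegment hJ₁ hp₁
  have hUV₂ : U ∩ V₂ ⊆ {q} := fun z hz =>
    (hUT ⟨hz.1, Or.inr (hV₂T₂ hz.2)⟩).resolve_left fun h => hp₂ (h ▸ hV₂T₂ hz.2)
  have hV₁U : V₁ ∩ U ⊆ {p} := fun z hz =>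
    (hUT ⟨hz.2, Or.inl (hV₁T₁ hz.1)⟩).resolve_right fun h => hq₁ (h ▸ hV₁T₁ hz.1)
  obtain ⟨P, hP, hsub⟩ := htg.exists_piece_of_triangle hU hV₂ hV₁ hpq
    (fun h => hq₁ (h ▸ hJ₁)) (fun h => hp₂ (h ▸ hJ₂)) hUV₂
    (fun z hz => h₁₂ ⟨hV₁T₁ hz.2, hV₂T₂ hz.1⟩) hV₁U
  exact ⟨P, hP, subset_union_left.trans (subset_union_left.trans hsub)⟩

lemma exists_piece_of_arc (htg : IsTreeGraded X 𝒞) {T₁ T₂ : Set X} {a J c : X}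
    (hT₁ : IsGeodesicSegment T₁ a J) (hT₂ : IsGeodesicSegment T₂ J c) (h₁₂ : T₁ ∩ T₂ ⊆ {J})
    (hU : IsGeodesicSegment U p q) (hpq : p ≠ q) (hp : p ∈ T₁ ∪ T₂) (hq : q ∈ T₁ ∪ T₂)
    (hUT : U ∩ (T₁ ∪ T₂) ⊆ {p, q}) : ∃ P ∈ 𝒞, U ⊆ P := by
  have bigon : ∀ {T : Set X} {u v : X}, IsGeodesicSegment T u v → T ⊆ T₁ ∪ T₂ → p ∈ T →
      q ∈ T → ∃ P ∈ 𝒞, U ⊆ P := by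
    intro T u v hT hTsub hpT hqT
    obtain ⟨V, hVT, hV⟩ := hT.exists_subsegment hpT hqT
    obtain ⟨P, hP, hsub⟩ :=
      htg.exists_piece_of_bigon hU hV hpq fun z hz => hUT ⟨hz.1, hTsub (hVT hz.2)⟩
    exact ⟨P, hP, subset_union_left.trans hsub⟩
  by_cases h₁ : p ∈ T₁ ∧ q ∈ T₁
  · exact bigon hT₁ subset_union_left h₁.1 h₁.2
  by_cases h₂ : p ∈ T₂ ∧ q ∈ T₂
  · exact bigon hT₂ subset_union_right h₂.1 h₂.2
  by_cases hp₁ : p ∈ T₁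
  · have hq₂ : q ∈ T₂ := hq.resolve_left fun h => h₁ ⟨hp₁, h⟩
    exact htg.exists_piece_of_corner hT₁ hT₂ hT₁.right_mem hT₂.left_mem h₁₂ hU hpq hp₁
      (fun h => h₂ ⟨h, hq₂⟩) hq₂ (fun h => h₁ ⟨hp₁, h⟩) hUT
  · have hp₂ : p ∈ T₂ := hp.resolve_left hp₁
    have hq₁ : q ∈ T₁ := hq.resolve_right fun h => h₂ ⟨hp₂, h⟩
    exact htg.exists_piece_of_corner hT₂ hT₁ hT₂.left_mem hT₁.right_mem
      (by rwa [inter_comm]) hU hpq hp₂ hp₁ hq₁ (fun h => h₂ ⟨hp₂, h⟩) (by rwa [union_comm])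

/-- The arc formed by the two geodesics avoiding `m` closes the part of `SA ∪ SB` around `m`
into a bigon or a triangle. -/
lemma exists_piece_of_two_joinedAvoiding (htg : IsTreeGraded X 𝒞) {SA SB : Set X}
    (h₁ : JoinedAvoiding m a c) (h₂ : JoinedAvoiding m c b) (hSA : IsGeodesicSegment SA a m)
    (hSB : IsGeodesicSegment SB m b) (hadd : dist a b = dist a m + dist m b) :
    ∃ P ∈ 𝒞, m ∈ P ∧ (∃ p ∈ SA, p ≠ m ∧ p ∈ P) ∧ ∃ q ∈ SB, q ≠ m ∧ q ∈ P := by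
  obtain ⟨S₁, hS₁, hmS₁⟩ := h₁
  obtain ⟨S₂, hS₂, hmS₂⟩ := h₂
  obtain ⟨J, hJ, T₁, hT₁S₁, hT₁, hT₁S₂⟩ :=
    hS₁.exists_first_mem hS₂.isCompact.isClosed hS₂.left_mem
  obtain ⟨T₂, hT₂S₂, hT₂⟩ := hS₂.exists_subsegment hJ hS₂.right_mem
  have hmK : m ∉ T₁ ∪ T₂ := by
    rintro (h | h)
    exacts [hmS₁ (hT₁S₁ h), hmS₂ (hT₂S₂ h)]
  have hK : IsClosed (T₁ ∪ T₂) := (hT₁.isCompact.union hT₂.isCompact).isClosed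
  obtain ⟨p, hpK, U₁, hU₁SA, hU₁, hU₁K⟩ := hSA.exists_last_mem hK (Or.inl hT₁.left_mem)
  obtain ⟨q, hqK, U₂, hU₂SB, hU₂, hU₂K⟩ := hSB.exists_first_mem hK (Or.inr hT₂.right_mem)
  have hpm : p ≠ m := fun h => hmK (h ▸ hpK)
  have hqm : q ≠ m := fun h => hmK (h ▸ hqK)
  have hd : dist p q = dist p m + dist m q := dist_eq_add_of_between hadd
    (hSA.dist_add_of_mem (hU₁SA hU₁.left_mem)) (hSB.dist_add_of_mem (hU₂SB hU₂.right_mem))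
  have hpq : p ≠ q := by
    rintro rfl
    linarith [dist_pos.2 hpm, dist_self p, dist_nonneg (x := m) (y := p)]
  obtain ⟨P, hP, hsub⟩ := htg.exists_piece_of_arc hT₁ hT₂
    (fun z hz => hT₁S₂ ⟨hz.1, hT₂S₂ hz.2⟩) (hU₁.union hU₂ hd) hpq hpK hqK (by
      rintro z ⟨hz | hz, hzK⟩
      exacts [Or.inl (hU₁K ⟨hz, hzK⟩), Or.inr (hU₂K ⟨hz, hzK⟩)])
  exact ⟨P, hP, hsub (Or.inl hU₁.right_mem), ⟨p, hU₁SA hU₁.left_mem, hpm,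
    hsub (Or.inl hU₁.left_mem)⟩, q, hU₂SB hU₂.right_mem, hqm, hsub (Or.inr hU₂.right_mem)⟩

end IsTreeGraded

namespace IsSide

variable {𝒞 : Set (Set X)} {A B : Set X} {m a b c : X}

/-- If every geodesic `a → b` passes through `m`, a piece at `m` meets the geodesic from `a` that
certifies the side, and carries the side across `m` onto the far half of a geodesic `a → m → b`. -/
lemma exists_joinedAvoiding (hA : IsSide 𝒞 m A) (htg : IsTreeGraded X 𝒞)
    (hgeo : IsGeodesicSpace X) (ha : a ∈ A) (h₁ : JoinedAvoiding m a c)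
    (h₂ : JoinedAvoiding m c b) : ∃ a' ∈ A, JoinedAvoiding m a' b := by
  by_cases hab : JoinedAvoiding m a b
  · exact ⟨a, ha, hab⟩
  have hadd : dist a b = dist a m + dist m b :=
    by_contra fun h => hab (joinedAvoiding_of_dist_ne hgeo (Ne.symm h))
  obtain ⟨SA, hSA, -, hSApc⟩ := hA.2 a ha
  obtain ⟨SB, hSB⟩ := exists_isGeodesicSegment hgeo m b
  obtain ⟨P, hP, hmP, ⟨p, hpSA, hpm, hpP⟩, q, hqSB, hqm, hqP⟩ :=
    htg.exists_piece_of_two_joinedAvoiding h₁ h₂ hSA hSB hadd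
  obtain ⟨T, -, hT⟩ := hSB.exists_subsegment hqSB hSB.right_mem
  refine ⟨q, hSApc P hP hmP ⟨p, hpP, hpSA, hpm⟩ ⟨hqP, hqm⟩, T, hT, fun hmT => hqm ?_⟩
  have h₁ := hT.dist_add_of_mem hmT
  have h₂ := hSB.dist_add_of_mem hqSB
  exact dist_eq_zero.1 (by linarith [dist_comm q m, dist_nonneg (x := q) (y := m)])

lemma not_joinedAvoiding (hA : IsSide 𝒞 m A) (htg : IsTreeGraded X 𝒞)
    (hB : IsSide 𝒞 m B) (hAB : Disjoint A B) (ha : a ∈ A) (hb : b ∈ B) :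
    ¬ JoinedAvoiding m a b := by
  rintro ⟨S, hS, hmS⟩
  obtain ⟨SA, hSA, hSAA, hSApc⟩ := hA.2 a ha
  obtain ⟨SB, hSB, hSBB, -⟩ := hB.2 b hb
  have hSAB : SA ∩ SB ⊆ {m} := fun z hz =>
    by_contra fun hzm => hAB.ne_of_mem (hSAA ⟨hz.1, hzm⟩) (hSBB ⟨hz.2, hzm⟩) rfl
  obtain ⟨p, hpA, T, hTS, hT, hTA⟩ := hS.exists_last_mem hSA.isCompact.isClosed hSA.left_mem
  obtain ⟨q, hqB, T', hT'T, hT', hT'B⟩ := hT.exists_first_mem hSB.isCompact.isClosed hSB.left_mem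
  have hpm : p ≠ m := fun h => hmS (h ▸ hTS hT.left_mem)
  have hqm : q ≠ m := fun h => hmS (h ▸ hTS (hT'T hT'.right_mem))
  obtain ⟨VB, hVB, hVB'⟩ := hSB.exists_subsegment hqB hSB.right_mem
  obtain ⟨VA, hVA, hVA'⟩ := hSA.exists_subsegment hSA.right_mem hpA
  obtain ⟨P, hP, hsub⟩ := htg.exists_piece_of_triangle hT' hVB' hVA'
    (fun h => hpm (hSAB ⟨hpA, h ▸ hqB⟩)) hqm hpm.symm
    (fun z hz => hT'B ⟨hz.1, hVB hz.2⟩) (fun z hz => hSAB ⟨hVA hz.2, hVB hz.1⟩)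
    (fun z hz => hTA ⟨hT'T hz.2, hVA hz.1⟩)
  have hqA := hSApc P hP (hsub (Or.inl (Or.inr hVB'.right_mem)))
    ⟨p, hsub (Or.inl (Or.inl hT'.left_mem)), hpA, hpm⟩ ⟨hsub (Or.inl (Or.inl hT'.right_mem)), hqm⟩
  exact hAB.ne_of_mem hqA (hSBB ⟨hqB, hqm⟩) rfl

theorem not_reflTransGen (hA : IsSide 𝒞 m A) (htg : IsTreeGraded X 𝒞)
    (hgeo : IsGeodesicSpace X) (hB : IsSide 𝒞 m B) (hAB : Disjoint A B) (ha : a ∈ A)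
    (hb : b ∈ B) : ¬ ReflTransGen (JoinedAvoiding m) a b := by
  have key : ∀ c, ReflTransGen (JoinedAvoiding m) c b → ∀ a ∈ A, ¬ JoinedAvoiding m a c := by
    intro c hc
    induction hc using ReflTransGen.head_induction_on with
    | refl => exact fun a ha => hA.not_joinedAvoiding htg hB hAB ha hb
    | head hcc' _ ih =>
      intro a ha hac
      obtain ⟨a', ha', h'⟩ := hA.exists_joinedAvoiding htg hgeo ha hac hcc'
      exact ih a' ha' h'
  intro h
  rcases ReflTransGen.cases_head h with rfl | ⟨c, hac, hcb⟩
  · exact hAB.ne_of_mem ha hb rfl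
  · exact key c hcb a ha hac

end IsSide

def sideOf (𝒞 : Set (Set X)) (m : X) (K : Set X) : Set X :=
  K ∪ {p | p ≠ m ∧ ∃ P ∈ 𝒞, m ∈ P ∧ p ∈ P ∧ (P ∩ K).Nonempty}

namespace IsTreeGraded

variable {𝒞 : Set (Set X)} {K Q Q₁ Q₂ : Set X} {m w p q : X}

lemma isSide_sideOf (htg : IsTreeGraded X 𝒞) (hgeo : IsGeodesicSpace X) (hmK : m ∉ K)
    (hK : ∀ p ∈ K, ∃ S, IsGeodesicSegment S p m ∧ S \ {m} ⊆ K) :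
    IsSide 𝒞 m (sideOf 𝒞 m K) := by
  refine ⟨?_, ?_⟩
  · rintro (h | ⟨h, -⟩)
    exacts [hmK h, h rfl]
  rintro p (hp | ⟨-, P, hP, hmP, hpP, hPK⟩)
  · obtain ⟨S, hS, hSK⟩ := hK p hp
    exact ⟨S, hS, hSK.trans subset_union_left, fun R hR hmR ⟨z, hzR, hzS⟩ y hy =>
      Or.inr ⟨hy.2, R, hR, hmR, hy.1, z, hzR, hSK hzS⟩⟩
  · obtain ⟨S, hS⟩ := exists_isGeodesicSegment hgeo p m
    have hSP := htg.subset_of_isGeodesicSegment hP hS hpP hmP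
    have hPside : P \ {m} ⊆ sideOf 𝒞 m K := fun y hy => Or.inr ⟨hy.2, P, hP, hmP, hy.1, hPK⟩
    refine ⟨S, hS, fun z hz => hPside ⟨hSP hz.1, hz.2⟩, fun R hR hmR ⟨z, hzR, hzS, hzm⟩ => ?_⟩
    rwa [htg.eq_of_mem_of_mem hR hP hzm hzR (hSP hzS) hmR hmP]

lemma sideOf_diff_singleton (htg : IsTreeGraded X 𝒞) (hQ : Q ∈ 𝒞) (hw : w ∈ Q) :
    sideOf 𝒞 w (Q \ {w}) = Q \ {w} := by
  refine subset_antisymm (union_subset subset_rfl ?_) subset_union_left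
  rintro p ⟨hpw, P, hP, hwP, hpP, z, hzP, hzQ, hzw⟩
  rw [htg.eq_of_mem_of_mem hP hQ hzw hzP hzQ hwP hw] at hpP
  exact ⟨hpP, hpw⟩

lemma disjoint_sideOf_of_noStraddle (htg : IsTreeGraded X 𝒞) {γ : ℝ → X} {x y : X}
    (hγ : IsGeodesicFrom γ x y) {t : ℝ} (ht : t ∈ Icc 0 (dist x y))
    (hns : NoStraddle 𝒞 γ (dist x y) t) :
    Disjoint (sideOf 𝒞 (γ t) (γ '' Ico 0 t)) (sideOf 𝒞 (γ t) (γ '' Ioc t (dist x y))) := by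
  have hstraddle : ∀ P ∈ 𝒞, (P ∩ γ '' Ico 0 t).Nonempty →
      (P ∩ γ '' Ioc t (dist x y)).Nonempty → False := by
    rintro P hP ⟨_, hsP, s, hs, rfl⟩ ⟨_, huP, u, hu, rfl⟩
    exact hns P hP s ⟨hs.1, hs.2.le.trans ht.2⟩ u ⟨ht.1.trans hu.1.le, hu.2⟩ hs.2 hu.1 hsP huP
  refine disjoint_left.2 ?_
  rintro p (hpL | ⟨hpm, P, hP, hmP, hpP, hPL⟩) (hpR | ⟨-, P', hP', hmP', hpP', hP'R⟩)
  · obtain ⟨s, hs, rfl⟩ := hpL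
    obtain ⟨u, hu, he⟩ := hpR
    have := hγ.injOn ⟨ht.1.trans hu.1.le, hu.2⟩ ⟨hs.1, hs.2.le.trans ht.2⟩ he
    linarith [hs.2, hu.1]
  · exact hstraddle P' hP' ⟨p, hpP', hpL⟩ hP'R
  · exact hstraddle P hP hPL ⟨p, hpP, hpR⟩
  · rw [htg.eq_of_mem_of_mem hP hP' hpm hpP hpP' hmP hmP'] at hPL
    exact hstraddle P' hP' hPL hP'R

/-- Property (T₂') of tree-graded spaces, for chains of geodesics. -/
theorem not_reflTransGen_of_noStraddle (htg : IsTreeGraded X 𝒞) (hgeo : IsGeodesicSpace X)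
    {γ : ℝ → X} {x y : X} (hγ : IsGeodesicFrom γ x y) {t : ℝ} (ht : t ∈ Ioo 0 (dist x y))
    (hns : NoStraddle 𝒞 γ (dist x y) t) : ¬ ReflTransGen (JoinedAvoiding (γ t)) x y := by
  have htI : t ∈ Icc 0 (dist x y) := Ioo_subset_Icc_self ht
  have hL : IsSide 𝒞 (γ t) (sideOf 𝒞 (γ t) (γ '' Ico 0 t)) := by
    refine htg.isSide_sideOf hgeo (fun ⟨s, hs, he⟩ => hs.2.ne (hγ.injOn ?_ htI he)) ?_
    · exact ⟨hs.1, hs.2.le.trans htI.2⟩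
    rintro _ ⟨r, hr, rfl⟩
    refine ⟨_, hγ.isGeodesicSegment_image ⟨hr.1, hr.2.le.trans htI.2⟩ htI hr.2.le, ?_⟩
    rintro _ ⟨⟨s, hs, rfl⟩, hst⟩
    exact ⟨s, ⟨hr.1.trans hs.1, hs.2.lt_of_ne fun h => hst (h ▸ rfl)⟩, rfl⟩
  have hR : IsSide 𝒞 (γ t) (sideOf 𝒞 (γ t) (γ '' Ioc t (dist x y))) := by
    refine htg.isSide_sideOf hgeo (fun ⟨s, hs, he⟩ => hs.1.ne' (hγ.injOn ?_ htI he)) ?_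
    · exact ⟨htI.1.trans hs.1.le, hs.2⟩
    rintro _ ⟨r, hr, rfl⟩
    refine ⟨_, (hγ.isGeodesicSegment_image htI ⟨htI.1.trans hr.1.le, hr.2⟩ hr.1.le).symm, ?_⟩
    rintro _ ⟨⟨s, hs, rfl⟩, hst⟩
    exact ⟨s, ⟨hs.1.lt_of_ne fun h => hst (h ▸ rfl), hs.2.trans hr.2⟩, rfl⟩
  exact hL.not_reflTransGen htg hgeo hR (htg.disjoint_sideOf_of_noStraddle hγ htI hns)
    (Or.inl ⟨0, ⟨le_rfl, ht.1⟩, hγ.1⟩) (Or.inl ⟨dist x y, ⟨ht.2, le_rfl⟩, hγ.2.1⟩)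

theorem not_reflTransGen_of_mem_inter (htg : IsTreeGraded X 𝒞) (hgeo : IsGeodesicSpace X)
    (hQ₁ : Q₁ ∈ 𝒞) (hQ₂ : Q₂ ∈ 𝒞) (hne : Q₁ ≠ Q₂) (hw₁ : w ∈ Q₁) (hw₂ : w ∈ Q₂)
    (hp : p ∈ Q₁ \ {w}) (hq : q ∈ Q₂ \ {w}) : ¬ ReflTransGen (JoinedAvoiding w) p q := by
  have side : ∀ {Q}, Q ∈ 𝒞 → w ∈ Q → IsSide 𝒞 w (Q \ {w}) := fun hQ hw => by
    rw [← htg.sideOf_diff_singleton hQ hw]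
    refine htg.isSide_sideOf hgeo (fun h => h.2 rfl) fun p hp => ?_
    obtain ⟨S, hS⟩ := exists_isGeodesicSegment hgeo p w
    exact ⟨S, hS, sdiff_subset_sdiff_left (htg.subset_of_isGeodesicSegment hQ hS hp.1 hw)⟩
  exact (side hQ₁ hw₁).not_reflTransGen htg hgeo (side hQ₂ hw₂)
    (disjoint_left.2 fun z hz₁ hz₂ => hz₁.2 (htg.t1 Q₁ hQ₁ Q₂ hQ₂ hne ⟨hz₁.1, hz₂.1⟩ ⟨hw₁, hw₂⟩))
    hp hq

end IsTreeGraded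

namespace IsometryEquiv

lemma pow_add_apply (g : X ≃ᵢ X) (i j : ℕ) (w : X) : (g ^ (i + j)) w = (g ^ i) ((g ^ j) w) := by
  rw [pow_add, IsometryEquiv.mul_apply]

lemma dist_pow_apply_pow_apply (g : X ≃ᵢ X) (w : X) {i j : ℕ} (hij : i ≤ j) :
    dist ((g ^ i) w) ((g ^ j) w) = dist w ((g ^ (j - i)) w) := by
  obtain ⟨k, rfl⟩ := Nat.exists_eq_add_of_le hij
  rw [Nat.add_sub_cancel_left, pow_add_apply, (g ^ i).dist_eq]

end IsometryEquiv

section Dynamics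

variable {𝒞 : Set (Set X)} {g : X ≃ᵢ X} {w x : X} {γ : ℝ → X}

lemma reflTransGen_joinedAvoiding_pow (hgeo : IsGeodesicSpace X) {e : ℝ} {n : ℕ} (he : 0 < e)
    (hlin : ∀ k ≤ n + 1, dist w ((g ^ k) w) = k * e) :
    ReflTransGen (JoinedAvoiding ((g ^ (n + 1)) w)) ((g ^ n) w) w := by
  have hd : ∀ i j, i ≤ j → j ≤ n + 1 → dist ((g ^ i) w) ((g ^ j) w) = (j - i : ℕ) * e :=
    fun i j hij hj => by rw [g.dist_pow_apply_pow_apply w hij, hlin _ (by omega)]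
  suffices ∀ i ≤ n, ReflTransGen (JoinedAvoiding ((g ^ (n + 1)) w)) ((g ^ i) w) w from
    this n le_rfl
  intro i
  induction i with
  | zero => exact fun _ => by rw [pow_zero]; exact .refl
  | succ i ih =>
    intro hi
    refine ReflTransGen.head (joinedAvoiding_of_dist_ne hgeo ?_) (ih (by omega))
    rw [hd (i + 1) (n + 1) (by omega) le_rfl, dist_comm, hd i (n + 1) (by omega) le_rfl,
      dist_comm, hd i (i + 1) (by omega) (by omega)]
    obtain ⟨k, rfl⟩ := Nat.exists_eq_add_of_le hi
    rw [show i + 1 + k + 1 - (i + 1) = k + 1 by omega, show i + 1 + k + 1 - i = k + 2 by omega,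
      show i + 1 - i = 1 by omega]
    push_cast
    nlinarith [mul_nonneg (Nat.cast_nonneg (α := ℝ) k) he.le]

/-- A geodesic from `w` to `g^(n+2) w` missing `g^(n+1) w` would complete a chain from `g^n w`
around `g^(n+1) w`, which `g^(-n)` carries to a chain from `w` to `g (g w)` around `g w`. -/
lemma dist_pow_apply_of_not_reflTransGen (hgeo : IsGeodesicSpace X)
    (hsep : ¬ ReflTransGen (JoinedAvoiding (g w)) w (g (g w))) (hw : g w ≠ w) (n : ℕ) :
    dist w ((g ^ n) w) = n * dist w (g w) := by
  set e := dist w (g w)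
  have he : 0 < e := dist_pos.2 hw.symm
  suffices ∀ n : ℕ, ∀ k ≤ n + 1, dist w ((g ^ k) w) = k * e from this n n (by omega)
  intro n
  induction n with
  | zero =>
    intro k hk
    interval_cases k <;> simp [e]
  | succ n ih =>
    intro k hk
    rcases Nat.lt_or_ge k (n + 2) with hk' | hk'
    · exact ih k (by omega)
    obtain rfl : k = n + 2 := by omega
    obtain ⟨S, hS⟩ := exists_isGeodesicSegment hgeo w ((g ^ (n + 2)) w)
    by_cases hmem : (g ^ (n + 1)) w ∈ S
    · rw [← hS.dist_add_of_mem hmem, ih (n + 1) le_rfl,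
        g.dist_pow_apply_pow_apply w (by omega : n + 1 ≤ n + 2),
        show n + 2 - (n + 1) = 1 by omega, pow_one]
      push_cast
      ring
    · have hchain := (reflTransGen_joinedAvoiding_pow hgeo he ih).tail ⟨S, hS, hmem⟩
      rw [g.pow_add_apply n 1, g.pow_add_apply n 2, pow_one, sq,
        IsometryEquiv.mul_apply] at hchain
      have := JoinedAvoiding.reflTransGen_map hchain (g ^ n)⁻¹
      simp only [IsometryEquiv.inv_apply_self] at this
      exact absurd this hsep

theorem not_isBounded_orbit (hgeo : IsGeodesicSpace X) (hw : g w ≠ w)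
    (hsep : ¬ ReflTransGen (JoinedAvoiding (g w)) w (g (g w))) :
    ¬ Bornology.IsBounded (range fun k : ℤ => (g ^ k) w) := by
  intro hb
  obtain ⟨C, hC⟩ := Metric.isBounded_iff.1 hb
  obtain ⟨n, hn⟩ := exists_nat_gt (C / dist w (g w))
  have := hC (x := w) ⟨0, by simp⟩ (y := (g ^ n) w) ⟨n, by simp⟩
  rw [dist_pow_apply_of_not_reflTransGen hgeo hsep hw, ← le_div_iff₀ (dist_pos.2 hw.symm)] at this
  linarith

variable (htg : IsTreeGraded X 𝒞) (hgeo : IsGeodesicSpace X)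
  (hbdd : ∀ p : X, Bornology.IsBounded (range fun k : ℤ => (g ^ k) p))
include htg hgeo hbdd

theorem image_eq_of_mem_inter (hperm : ∀ P ∈ 𝒞, g '' P ∈ 𝒞) {Q : Set X} (hQ : Q ∈ 𝒞)
    (hwQ : w ∈ Q) (hwgQ : w ∈ g '' Q) (hw : g w ≠ w) : g '' Q = Q := by
  by_contra hne
  refine not_isBounded_orbit hgeo hw ?_ (hbdd w)
  exact htg.not_reflTransGen_of_mem_inter hgeo (hperm Q hQ) (hperm _ (hperm Q hQ))
    (fun h => hne (image_injective.2 g.injective h).symm) (mem_image_of_mem g hwQ)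
    (mem_image_of_mem g hwgQ) ⟨hwgQ, hw.symm⟩
    ⟨mem_image_of_mem g (mem_image_of_mem g hwQ), fun h => hw (g.injective h)⟩

theorem mem_image_of_noStraddle_of_half_le (hγ : IsGeodesicFrom γ x (g x)) {β : ℝ}
    (hβ : dist x (g x) / 2 ≤ β) (hβd : β < dist x (g x))
    (hns : NoStraddle 𝒞 γ (dist x (g x)) β) : γ β ∈ g '' (γ '' Icc 0 β) := by
  by_contra hA
  have hβI : β ∈ Icc 0 (dist x (g x)) := ⟨by linarith, hβd.le⟩
  have hb : g (γ β) ≠ γ β := fun h => hA ⟨γ β, ⟨β, ⟨hβI.1, le_rfl⟩, rfl⟩, h⟩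
  refine not_isBounded_orbit hgeo hb (fun hchain => ?_) (hbdd _)
  have link₁ : JoinedAvoiding (g (γ β)) (g x) (γ β) := joinedAvoiding_of_dist_ne hgeo <| by
    rw [g.dist_eq, hγ.dist_left_apply hβI, dist_comm (g x), hγ.dist_apply_right hβI]
    linarith [dist_pos.2 hb]
  have hseg := hγ.isGeodesicSegment_image ⟨le_rfl, hβI.1.trans hβI.2⟩ hβI hβI.1
  rw [hγ.1] at hseg
  have link₂ : JoinedAvoiding (g (γ β)) (g (g (γ β))) (g (g x)) :=
    ⟨_, ((hseg.map g).map g).symm, fun ⟨_, ⟨y, hy, rfl⟩, he⟩ => hA ⟨y, hy, g.injective he⟩⟩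
  have := JoinedAvoiding.reflTransGen_map
    (((ReflTransGen.single link₁).trans hchain).tail link₂) g⁻¹
  simp only [IsometryEquiv.inv_apply_self] at this
  exact htg.not_reflTransGen_of_noStraddle hgeo hγ ⟨by linarith, hβd⟩ hns this

theorem mem_image_of_noStraddle_of_le_half (hγ : IsGeodesicFrom γ x (g x)) {α : ℝ} (hα : 0 < α)
    (hαd : α ≤ dist x (g x) / 2) (hns : NoStraddle 𝒞 γ (dist x (g x)) α) :
    g (γ α) ∈ γ '' Icc α (dist x (g x)) := by
  by_contra hV
  have hαI : α ∈ Icc 0 (dist x (g x)) := ⟨hα.le, by linarith⟩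
  have ha : g (γ α) ≠ γ α := fun h => hV ⟨α, ⟨le_rfl, hαI.2⟩, h.symm⟩
  refine not_isBounded_orbit hgeo ha (fun hchain => ?_) (hbdd _)
  have link₁ : JoinedAvoiding (g (γ α)) (g (g x)) (g (g (γ α))) :=
    joinedAvoiding_of_dist_ne hgeo <| by
      rw [g.dist_eq, g.dist_eq, g.dist_eq, g.dist_eq, dist_comm, hγ.dist_apply_right hαI,
        hγ.dist_left_apply hαI]
      linarith [dist_pos.2 ha.symm]
  have hseg := hγ.isGeodesicSegment_image hαI ⟨dist_nonneg, le_rfl⟩ hαI.2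
  rw [hγ.2.1] at hseg
  have link₂ : JoinedAvoiding (g (γ α)) (γ α) (g x) := ⟨_, hseg, hV⟩
  have := JoinedAvoiding.reflTransGen_map
    (((ReflTransGen.single link₁).trans (Std.Symm.symm _ _ hchain)).tail link₂) g⁻¹
  simp only [IsometryEquiv.inv_apply_self] at this
  exact htg.not_reflTransGen_of_noStraddle hgeo hγ ⟨hα, by linarith⟩ hns
    (Std.Symm.symm _ _ this)

end Dynamics

lemma IsTreeGraded.exists_trace_of_isMiddleCutPiece {𝒞 : Set (Set X)} (htg : IsTreeGraded X 𝒞)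
    {x y : X} {Q : Set X} (hQ : IsMiddleCutPiece 𝒞 x y Q) :
    ∃ γ : ℝ → X, IsGeodesicFrom γ x y ∧ ∃ α ∈ Icc 0 (dist x y), ∃ β ∈ Icc 0 (dist x y),
      α < dist x y / 2 ∧ dist x y / 2 < β ∧ ∀ r ∈ Icc 0 (dist x y), γ r ∈ Q ↔ r ∈ Icc α β := by
  obtain ⟨-, hQ𝒞, γ, hγ, hnomid, a, ha, b, hb, haQ, hbQ, hxa, -, hyb, -⟩ := hQ
  obtain ⟨ta, hta, rfl, -⟩ := id ha
  obtain ⟨tb, htb, rfl, -⟩ := id hb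
  have hma := hnomid _ ha
  have hmb := hnomid _ hb
  rw [hγ.dist_left_apply hta, dist_comm, hγ.dist_apply_right hta] at hma
  rw [hγ.dist_left_apply htb, dist_comm, hγ.dist_apply_right htb] at hmb
  rw [hγ.dist_left_apply hta] at hxa
  rw [dist_comm, hγ.dist_apply_right htb] at hyb
  obtain ⟨α, hα, β, hβ, htrace⟩ := htg.exists_trace hQ𝒞 hγ hta haQ
  have hαa := ((htrace ta hta).1 haQ).1
  have hbβ := ((htrace tb htb).1 hbQ).2
  refine ⟨γ, hγ, α, hα, β, hβ, ?_, ?_, htrace⟩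
  · exact hαa.trans_lt (hxa.lt_of_ne fun h => hma (by linarith))
  · exact (lt_of_le_of_ne (by linarith) fun h => hmb (by linarith)).trans_le hbβ

section MiddleCut

variable {𝒞 : Set (Set X)} {g : X ≃ᵢ X} {x : X}
  (htg : IsTreeGraded X 𝒞) (hgeo : IsGeodesicSpace X)
  (hbdd : ∀ p : X, Bornology.IsBounded (range fun k : ℤ => (g ^ k) p))
include htg hgeo hbdd

theorem apply_eq_of_isMiddleCutPoint (hx : g x ≠ x) {m : X}
    (hm : IsMiddleCutPoint 𝒞 x (g x) m) : g m = m := by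
  rcases hm with ⟨h, -⟩ | ⟨-, γ, hγ, hcut, hxm, -⟩
  · exact absurd h.symm hx
  have hd : 0 < dist x (g x) := dist_pos.2 hx.symm
  obtain ⟨t, ht, rfl, -⟩ := id hcut
  obtain rfl : t = dist x (g x) / 2 := (hγ.dist_left_apply ht).symm.trans hxm
  obtain ⟨_, ⟨s, hs, rfl⟩, hgs⟩ := mem_image_of_noStraddle_of_half_le htg hgeo hbdd hγ le_rfl
    (by linarith) (htg.noStraddle_of_mem_cutpSet hγ ht hcut)
  have hs' := hγ.dist_left_apply ⟨hs.1, hs.2.trans ht.2⟩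
  rw [← g.dist_eq, hgs, dist_comm, hγ.dist_apply_right ht] at hs'
  rwa [show s = dist x (g x) / 2 by linarith] at hgs

/-- Where `Q` meets `γ` in `[α, β]`, either `γ β = g (γ (d - β))` or `g (γ α) = γ (d - α)` is a
point of `Q ∩ g '' Q` moved by `g`, whichever of `d - β`, `d - α` lies in `[α, β]`. -/
lemma exists_mem_image_inter_of_trace {Q : Set X} (hQ : Q ∈ 𝒞) {γ : ℝ → X}
    (hγ : IsGeodesicFrom γ x (g x)) {α β : ℝ} (hα : α ∈ Icc 0 (dist x (g x)))
    (hβ : β ∈ Icc 0 (dist x (g x))) (hαd : α < dist x (g x) / 2) (hβd : dist x (g x) / 2 < β)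
    (htrace : ∀ r ∈ Icc 0 (dist x (g x)), γ r ∈ Q ↔ r ∈ Icc α β) :
    ∃ w ∈ Q, w ∈ g '' Q ∧ g w ≠ w := by
  set d := dist x (g x)
  have hαβ : α < β := hαd.trans hβd
  have hmem : ∀ r, α ≤ r → r ≤ β → γ r ∈ Q := fun r h₁ h₂ =>
    (htrace r ⟨hα.1.trans h₁, h₂.trans hβ.2⟩).2 ⟨h₁, h₂⟩
  have hns : ∀ t, t = α ∨ t = β → NoStraddle 𝒞 γ d t := fun t =>
    htg.noStraddle_of_trace hQ hγ hα hβ hαβ htrace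
  rcases le_or_gt α (d - β) with h | h
  · obtain ⟨s, hs, hgs⟩ : ∃ s ∈ Icc 0 β, g (γ s) = γ β := by
      rcases hβ.2.lt_or_eq with hβd' | rfl
      · obtain ⟨_, ⟨s, hs, rfl⟩, hgs⟩ := mem_image_of_noStraddle_of_half_le htg hgeo hbdd hγ
          hβd.le hβd' (hns β (Or.inr rfl))
        exact ⟨s, hs, hgs⟩
      · exact ⟨0, ⟨le_rfl, hβ.1⟩, by rw [hγ.1, hγ.2.1]⟩
    have hs' := hγ.dist_left_apply ⟨hs.1, hs.2.trans hβ.2⟩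
    rw [← g.dist_eq, hgs, dist_comm, hγ.dist_apply_right hβ] at hs'
    refine ⟨γ β, hmem β hαβ.le le_rfl, ⟨γ s, hmem s (by linarith) hs.2, hgs⟩, fun hfix => ?_⟩
    have hβ' := hγ.dist_left_apply hβ
    rw [← g.dist_eq, hfix, dist_comm, hγ.dist_apply_right hβ] at hβ'
    linarith
  · obtain ⟨u, hu, hgu⟩ := mem_image_of_noStraddle_of_le_half htg hgeo hbdd hγ
      (by linarith [hβ.2]) hαd.le (hns α (Or.inl rfl))
    have huI : u ∈ Icc 0 d := ⟨hα.1.trans hu.1, hu.2⟩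
    have hu' := hγ.dist_apply_right huI
    rw [dist_comm, hgu, g.dist_eq, hγ.dist_left_apply hα] at hu'
    refine ⟨γ u, hmem u hu.1 (by linarith), hgu ▸ mem_image_of_mem g (hmem α le_rfl hαβ.le),
      fun hfix => ?_⟩
    rw [hgu, g.injective.eq_iff] at hfix
    have := hγ.injOn huI hα (hgu.trans hfix)
    linarith

theorem image_eq_of_isMiddleCutPiece (hperm : ∀ P ∈ 𝒞, g '' P ∈ 𝒞) {Q : Set X}
    (hQ : IsMiddleCutPiece 𝒞 x (g x) Q) : g '' Q = Q := by
  obtain ⟨γ, hγ, α, hα, β, hβ, hαd, hβd, htrace⟩ := htg.exists_trace_of_isMiddleCutPiece hQ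
  obtain ⟨w, hwQ, hwgQ, hw⟩ :=
    exists_mem_image_inter_of_trace htg hgeo hbdd hQ.2.1 hγ hα hβ hαd hβd htrace
  by_contra hne
  exact hne (image_eq_of_mem_inter htg hgeo hbdd hperm hQ.2.1 hwQ hwgQ hw)

end MiddleCut

end

theorem statement1_general {X : Type*} [MetricSpace X]
    (hgeo : IsGeodesicSpace X) (𝒞 : Set (Set X)) (htg : IsTreeGraded X 𝒞)
    (g : X ≃ᵢ X) (hperm : ∀ P ∈ 𝒞, g '' P ∈ 𝒞)
    (hbdd : ∀ p : X, Bornology.IsBounded (Set.range fun k : ℤ => (g ^ k) p))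
    (x : X) (hx : g x ≠ x) :
    (∀ m : X, IsMiddleCutPoint 𝒞 x (g x) m → g m = m) ∧
    (∀ Q : Set X, IsMiddleCutPiece 𝒞 x (g x) Q → g '' Q = Q) :=
  ⟨fun _ hm => apply_eq_of_isMiddleCutPoint htg hgeo hbdd hx hm,
    fun _ hQ => image_eq_of_isMiddleCutPiece htg hgeo hbdd hperm hQ⟩

/-- Let `X` be a complete geodesic metric space tree-graded with respect to
`𝒞`, and let `g` be an isometry of `X` permuting the pieces such that the cyclic group `⟨g⟩`
has bounded orbits. If `g x ≠ x`, then `g` fixes the middle cut-point of `x, g x` (if it has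
one) and fixes set-wise the middle cut-piece of `x, g x` (if it has one). -/
theorem statement1 {X : Type*} [MetricSpace X] [CompleteSpace X]
    (hgeo : IsGeodesicSpace X) (𝒞 : Set (Set X)) (htg : IsTreeGraded X 𝒞)
    (g : X ≃ᵢ X) (hperm : ∀ P ∈ 𝒞, g '' P ∈ 𝒞)
    (hbdd : ∀ p : X, Bornology.IsBounded (Set.range fun k : ℤ => (g ^ k) p))
    (x : X) (hx : g x ≠ x) :
    (∀ m : X, IsMiddleCutPoint 𝒞 x (g x) m → g m = m) ∧
    (∀ Q : Set X, IsMiddleCutPiece 𝒞 x (g x) Q → g '' Q = Q) :=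
  statement1_general hgeo 𝒞 htg g hperm hbdd x hx
end

section
/- Let (Xᵢ, dᵢ)_{i∈I} be a family of metric spaces, fix x = (xᵢ) ∈ ∏_{i∈I} Xᵢ, and let S₀ = { y ∈ ∏ Xᵢ : yᵢ ≠ xᵢ for at most countably many i and Σ_{i∈I} dᵢ(xᵢ, yᵢ) < ∞ }, endowed with the ℓ¹ metric dist(y,z) = Σ_{i∈I} dᵢ(yᵢ, zᵢ). Let a > 0 and let h : [0,a] → S₀ be a topological embedding such that for every i ∈ I there exist aᵢ ≥ 0, a geodesic γᵢ : [0,aᵢ] → Xᵢ with γᵢ(0) = (h(0))ᵢ, and a non-decreasing surjective function φᵢ : [0,a] → [0,aᵢ] with (h(t))ᵢ = γᵢ(φᵢ(t)) for all t ∈ [0,a]. Then h([0,a]) is a geodesic segment in (S₀, dist) joining h(0) to h(a); in particular, dist(h(s), h(u)) = dist(h(s), h(t)) + dist(h(t), h(u)) for all 0 ≤ s ≤ t ≤ u ≤ a. -/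
/-- The ℓ¹ distance on a product of metric spaces: the (extended) sum of the coordinate
distances, converted to a real number (it is finite on the ℓ¹-product around a basepoint). -/
noncomputable def l1dist {I : Type*} {X : I → Type*} [∀ i, MetricSpace (X i)]
    (y z : ∀ i, X i) : ℝ :=
  (∑' i, edist (y i) (z i)).toReal

/-- Membership in the ℓ¹-product `S₀` of the family `X` with basepoint `x`: the point `y`
differs from `x` in at most countably many coordinates and the sum of the coordinate
distances from `x` to `y` is finite. -/
def InL1 {I : Type*} {X : I → Type*} [∀ i, MetricSpace (X i)]
    (x y : ∀ i, X i) : Prop :=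
  {i | y i ≠ x i}.Countable ∧ (∑' i, edist (x i) (y i)) < ⊤

/-- Let `S₀` be the ℓ¹-product of metric spaces `X i` with basepoint `x`.
Let `h : [0,a] → S₀` be a topological embedding (an injective map, continuous for the ℓ¹
metric) such that each coordinate `t ↦ h t i` is a non-decreasing reparametrization of a
geodesic `γᵢ : [0, aᵢ] → X i` starting at `h 0 i`. Then `h([0,a])` is a geodesic segment of
`(S₀, l1dist)` joining `h 0` to `h a`; in particular `l1dist` is additive along `h`. -/
theorem statement4 {I : Type*} {X : I → Type*} [∀ i, MetricSpace (X i)]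
    (x : ∀ i, X i) (a : ℝ) (ha : 0 < a)
    (h : ℝ → ∀ i, X i)
    (hmem : ∀ t ∈ Set.Icc 0 a, InL1 x (h t))
    (hinj : Set.InjOn h (Set.Icc 0 a))
    (hcont : ∀ t ∈ Set.Icc 0 a, ∀ ε > 0, ∃ δ > 0, ∀ s ∈ Set.Icc 0 a,
      |s - t| < δ → l1dist (h s) (h t) < ε)
    (hcoord : ∀ i : I, ∃ (ai : ℝ) (γ : ℝ → X i) (φ : ℝ → ℝ),
      0 ≤ ai ∧ γ 0 = h 0 i ∧
      (∀ s ∈ Set.Icc (0 : ℝ) ai, ∀ t ∈ Set.Icc (0 : ℝ) ai, dist (γ s) (γ t) = |s - t|) ∧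
      (∀ s ∈ Set.Icc (0 : ℝ) a, ∀ t ∈ Set.Icc (0 : ℝ) a, s ≤ t → φ s ≤ φ t) ∧
      φ '' Set.Icc (0 : ℝ) a = Set.Icc (0 : ℝ) ai ∧
      ∀ t ∈ Set.Icc (0 : ℝ) a, h t i = γ (φ t)) :
    (∃ γ : ℝ → ∀ i, X i,
      γ 0 = h 0 ∧ γ (l1dist (h 0) (h a)) = h a ∧
      (∀ s ∈ Set.Icc (0 : ℝ) (l1dist (h 0) (h a)),
        ∀ t ∈ Set.Icc (0 : ℝ) (l1dist (h 0) (h a)),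
          l1dist (γ s) (γ t) = |s - t|) ∧
      γ '' Set.Icc (0 : ℝ) (l1dist (h 0) (h a)) = h '' Set.Icc (0 : ℝ) a) ∧
    ∀ s t u : ℝ, 0 ≤ s → s ≤ t → t ≤ u → u ≤ a →
      l1dist (h s) (h u) = l1dist (h s) (h t) + l1dist (h t) (h u) := by
  classical
  choose ai γi φi hai hγ0 hgeo hφmono hφim hhi using hcoord
  have hφmem : ∀ i, ∀ t ∈ Set.Icc (0:ℝ) a, φi i t ∈ Set.Icc 0 (ai i) := by
    intro i t ht
    rw [← hφim i]; exact Set.mem_image_of_mem _ ht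
  have hdist : ∀ i, ∀ s ∈ Set.Icc (0:ℝ) a, ∀ t ∈ Set.Icc (0:ℝ) a, s ≤ t →
      dist (h s i) (h t i) = φi i t - φi i s := by
    intro i s hs t ht hst
    rw [hhi i s hs, hhi i t ht, hgeo i _ (hφmem i s hs) _ (hφmem i t ht),
      abs_sub_comm, abs_of_nonneg (sub_nonneg.2 (hφmono i s hs t ht hst))]
  -- finiteness of the l1 sums
  have hfin : ∀ s ∈ Set.Icc (0:ℝ) a, ∀ t ∈ Set.Icc (0:ℝ) a,
      (∑' i, edist (h s i) (h t i)) ≠ ⊤ := by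
    intro s hs t ht
    have hle : (∑' i, edist (h s i) (h t i)) ≤
        (∑' i, edist (x i) (h s i)) + (∑' i, edist (x i) (h t i)) := by
      rw [← ENNReal.tsum_add]
      refine ENNReal.tsum_le_tsum fun i => ?_
      calc edist (h s i) (h t i) ≤ edist (h s i) (x i) + edist (x i) (h t i) :=
            edist_triangle _ _ _
        _ = edist (x i) (h s i) + edist (x i) (h t i) := by rw [edist_comm]
    exact ne_top_of_le_ne_top (ENNReal.add_ne_top.2
      ⟨(hmem s hs).2.ne, (hmem t ht).2.ne⟩) hle
  -- additivity at the edist level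
  have hesum : ∀ s ∈ Set.Icc (0:ℝ) a, ∀ t ∈ Set.Icc (0:ℝ) a, ∀ u ∈ Set.Icc (0:ℝ) a,
      s ≤ t → t ≤ u →
      (∑' i, edist (h s i) (h u i)) =
        (∑' i, edist (h s i) (h t i)) + (∑' i, edist (h t i) (h u i)) := by
    intro s hs t ht u hu hst htu
    rw [← ENNReal.tsum_add]
    refine tsum_congr fun i => ?_
    rw [edist_dist, edist_dist, edist_dist, ← ENNReal.ofReal_add dist_nonneg dist_nonneg,
      hdist i s hs t ht hst, hdist i t ht u hu htu, hdist i s hs u hu (hst.trans htu)]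
    ring_nf
  -- additivity of l1dist
  have hl1add : ∀ s ∈ Set.Icc (0:ℝ) a, ∀ t ∈ Set.Icc (0:ℝ) a, ∀ u ∈ Set.Icc (0:ℝ) a,
      s ≤ t → t ≤ u →
      l1dist (h s) (h u) = l1dist (h s) (h t) + l1dist (h t) (h u) := by
    intro s hs t ht u hu hst htu
    unfold l1dist
    rw [hesum s hs t ht u hu hst htu, ENNReal.toReal_add (hfin s hs t ht) (hfin t ht u hu)]
  have hsymm : ∀ y z : ∀ i, X i, l1dist y z = l1dist z y := by
    intro y z
    unfold l1dist
    exact congrArg ENNReal.toReal (tsum_congr fun i => edist_comm _ _)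
  have hnonneg : ∀ y z : ∀ i, X i, 0 ≤ l1dist y z := fun y z => ENNReal.toReal_nonneg
  have hself : ∀ y : ∀ i, X i, l1dist y y = 0 := by
    intro y
    unfold l1dist
    simp [edist_self]
  -- the arclength function f
  set f : ℝ → ℝ := fun t => l1dist (h 0) (h t) with hf
  have h0mem : (0:ℝ) ∈ Set.Icc (0:ℝ) a := Set.left_mem_Icc.2 ha.le
  have hamem : a ∈ Set.Icc (0:ℝ) a := Set.right_mem_Icc.2 ha.le
  have hf0 : f 0 = 0 := hself _
  have hfd : ∀ s ∈ Set.Icc (0:ℝ) a, ∀ t ∈ Set.Icc (0:ℝ) a, s ≤ t →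
      l1dist (h s) (h t) = f t - f s := by
    intro s hs t ht hst
    have := hl1add 0 h0mem s hs t ht hs.1 hst
    simp only [hf]
    linarith [this]
  have hfabs : ∀ s ∈ Set.Icc (0:ℝ) a, ∀ t ∈ Set.Icc (0:ℝ) a,
      l1dist (h s) (h t) = |f s - f t| := by
    intro s hs t ht
    rcases le_total s t with hst | hst
    · rw [hfd s hs t ht hst, abs_sub_comm,
        abs_of_nonneg (by linarith [hnonneg (h s) (h t), hfd s hs t ht hst])]
    · rw [hsymm, hfd t ht s hs hst,
        abs_of_nonneg (by linarith [hnonneg (h t) (h s), hfd t ht s hs hst])]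
  have hfmono : ∀ s ∈ Set.Icc (0:ℝ) a, ∀ t ∈ Set.Icc (0:ℝ) a, s ≤ t → f s ≤ f t := by
    intro s hs t ht hst
    have := hfd s hs t ht hst
    linarith [hnonneg (h s) (h t)]
  have key : ∀ s ∈ Set.Icc (0:ℝ) a, ∀ t ∈ Set.Icc (0:ℝ) a, s < t → f s ≠ f t := by
    intro s hs t ht hst hft
    have hz : l1dist (h s) (h t) = 0 := by rw [hfd s hs t ht hst.le, hft]; ring
    have hts : (∑' i, edist (h s i) (h t i)) = 0 := by
      rcases (ENNReal.toReal_eq_zero_iff _).1 hz with h' | h'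
      · exact h'
      · exact absurd h' (hfin s hs t ht)
    have hht : h s = h t := by
      funext i
      exact edist_eq_zero.1 (ENNReal.tsum_eq_zero.1 hts i)
    exact absurd (hinj hs ht hht) (ne_of_lt hst)
  have hfinj : Set.InjOn f (Set.Icc 0 a) := by
    intro s hs t ht hft
    rcases lt_trichotomy s t with hst | hst | hst
    · exact absurd hft (key s hs t ht hst)
    · exact hst
    · exact absurd hft.symm (key t ht s hs hst)
  have hfcont : ContinuousOn f (Set.Icc 0 a) := by
    rw [Metric.continuousOn_iff]
    intro t ht ε hε
    obtain ⟨δ, hδ, hδ'⟩ := hcont t ht ε hε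
    refine ⟨δ, hδ, fun s hs hd => ?_⟩
    rw [Real.dist_eq, ← hfabs s hs t ht]
    exact hδ' s hs (by rwa [Real.dist_eq] at hd)
  set L := l1dist (h 0) (h a) with hL
  have hfa : f a = L := rfl
  have hL0 : 0 ≤ L := hnonneg _ _
  have himage : f '' Set.Icc 0 a = Set.Icc 0 L := by
    apply Set.Subset.antisymm
    · rintro _ ⟨t, ht, rfl⟩
      exact ⟨hf0 ▸ hfmono 0 h0mem t ht ht.1, hfa ▸ hfmono t ht a hamem ht.2⟩
    · have := intermediate_value_Icc ha.le hfcont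
      rwa [hf0, hfa] at this
  constructor
  · -- the geodesic
    refine ⟨fun s => h (Function.invFunOn f (Set.Icc 0 a) s), ?_, ?_, ?_, ?_⟩
    · have hv : Function.invFunOn f (Set.Icc 0 a) (f 0) = 0 :=
        hfinj.leftInvOn_invFunOn h0mem
      rw [hf0] at hv
      show h (Function.invFunOn f (Set.Icc 0 a) 0) = h 0
      rw [hv]
    · have hv : Function.invFunOn f (Set.Icc 0 a) (f a) = a :=
        hfinj.leftInvOn_invFunOn hamem
      rw [hfa] at hv
      show h (Function.invFunOn f (Set.Icc 0 a) L) = h a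
      rw [hv]
    · intro s hs t ht
      have hs' : s ∈ f '' Set.Icc 0 a := himage ▸ hs
      have ht' : t ∈ f '' Set.Icc 0 a := himage ▸ ht
      obtain ⟨ps, hps, hfps⟩ := hs'
      obtain ⟨pt, hpt, hfpt⟩ := ht'
      have hgs : Function.invFunOn f (Set.Icc 0 a) s ∈ Set.Icc 0 a :=
        Function.invFunOn_mem ⟨ps, hps, hfps⟩
      have hgt : Function.invFunOn f (Set.Icc 0 a) t ∈ Set.Icc 0 a :=
        Function.invFunOn_mem ⟨pt, hpt, hfpt⟩
      rw [hfabs _ hgs _ hgt, Function.invFunOn_eq ⟨ps, hps, hfps⟩,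
        Function.invFunOn_eq ⟨pt, hpt, hfpt⟩]
    · show (fun s => h (Function.invFunOn f (Set.Icc 0 a) s)) '' Set.Icc 0 L = h '' Set.Icc 0 a
      rw [← himage]
      calc (fun s => h (Function.invFunOn f (Set.Icc 0 a) s)) '' (f '' Set.Icc 0 a)
          = h '' (Function.invFunOn f (Set.Icc 0 a) '' (f '' Set.Icc 0 a)) :=
            (Set.image_image _ _ _).symm
        _ = h '' Set.Icc 0 a := by rw [hfinj.invFunOn_image Set.Subset.rfl]
  · intro s t u hs hst htu hua
    exact hl1add s ⟨hs, by linarith⟩ t ⟨by linarith, by linarith⟩ u ⟨by linarith, hua⟩ hst htu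
end

section
/- Let (Tᵢ)_{i∈I} be a family of ℝ-trees, fix a = (aᵢ) ∈ ∏_{i∈I} Tᵢ, and let S₀ = { y ∈ ∏ Tᵢ : yᵢ ≠ aᵢ for at most countably many i and Σ_{i∈I} distᵢ(aᵢ, yᵢ) < ∞ }, endowed with the ℓ¹ metric dist(y,z) = Σ_{i∈I} distᵢ(yᵢ, zᵢ). Let Y ⊆ S₀ be a strongly convex subset (i.e., for every two points of Y, every geodesic of S₀ connecting them is contained in Y) containing at least two points, and suppose Y has a global cut-point x ∈ Y, i.e. Y ∖ {x} is not connected. Then there exists an index j ∈ I such that any two points of Y agree in every coordinate i ≠ j; that is, Y is contained in the factor { y ∈ S₀ : yᵢ = xᵢ for all i ≠ j }. -/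
/-- An ℝ-tree: a geodesic metric space in which any two points are joined by a unique
topological arc (any two injective continuous paths with the same endpoints have the
same image). -/
def IsRTree (T : Type*) [MetricSpace T] : Prop :=
  (∀ x y : T, ∃ γ : ℝ → T, IsGeodesicFrom γ x y) ∧
  ∀ f g : ℝ → T, ContinuousOn f (Set.Icc 0 1) → Set.InjOn f (Set.Icc 0 1) →
    ContinuousOn g (Set.Icc 0 1) → Set.InjOn g (Set.Icc 0 1) →
    f 0 = g 0 → f 1 = g 1 →
    f '' Set.Icc (0 : ℝ) 1 = g '' Set.Icc (0 : ℝ) 1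

/-!
Suppose `p` and `q` lie on different sides of the cut at `x`, `p` differs from `x` in the
coordinate `i`, and `q` differs from `x` in a coordinate `j ≠ i`. Join them by the ℓ¹-geodesic
that first moves the `j`-th coordinate all the way from `p j` to `q j` along a geodesic of the
`j`-th tree, and only then moves the other coordinates. Each of its points has either `j`-th
coordinate `q j ≠ x j` or `i`-th coordinate `p i ≠ x i`, so the geodesic, which lies in `Y` by
strong convexity, avoids `x`; since an interval is connected, it cannot pass from one side of the
cut to the other. Hence all points of `Y ∖ {x}` differ from `x` in one and the same coordinate.
-/

open Set

section Schedule

variable {I : Type*}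

/-- `f i t` is how far the `i`-th coordinate has travelled, out of the distance `d i`, at time
`t` of a path of ℓ¹-length `D`. -/
def IsSchedule (d : I → ℝ) (D : ℝ) (f : I → ℝ → ℝ) : Prop :=
  (∀ i, Monotone (f i)) ∧ (∀ i, ∀ t ∈ Icc 0 D, f i t ∈ Icc 0 (d i)) ∧
    ∀ t ∈ Icc 0 D, HasSum (fun i => f i t) t

variable {d : I → ℝ} {D : ℝ} {f : I → ℝ → ℝ}

theorem IsSchedule.apply_zero (hf : IsSchedule d D f) (hD : 0 ≤ D) (i : I) : f i 0 = 0 := by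
  have h0 : (0 : ℝ) ∈ Icc 0 D := ⟨le_rfl, hD⟩
  refine le_antisymm (not_lt.1 fun hpos => lt_irrefl (0 : ℝ) ?_) (hf.2.1 i 0 h0).1
  exact hasSum_lt (fun k => (hf.2.1 k 0 h0).1) hpos hasSum_zero (hf.2.2 0 h0)

theorem IsSchedule.apply_right (hf : IsSchedule d D f) (hd : HasSum d D) (hD : 0 ≤ D) (i : I) :
    f i D = d i := by
  have hDD : D ∈ Icc 0 D := ⟨hD, le_rfl⟩
  refine le_antisymm (hf.2.1 i D hDD).2 (not_lt.1 fun hlt => lt_irrefl D ?_)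
  exact hasSum_lt (fun k => (hf.2.1 k D hDD).2) hlt (hf.2.2 D hDD) hd

/-- The schedule that covers `d j` first and then all other distances proportionally. -/
theorem exists_isSchedule_first (hd0 : ∀ i, 0 ≤ d i) (hd : HasSum d D) (j : I) :
    ∃ f, IsSchedule d D f ∧ ∀ t, f j t = d j ∨ ∀ i ≠ j, f i t = 0 := by
  classical
  have hdj : 0 ≤ D - d j := sub_nonneg.2 (le_hasSum hd j fun i _ => hd0 i)
  set ρ : ℝ → ℝ := fun t => max 0 (t - d j) / (D - d j) with hρ
  have hρ_mono : Monotone ρ := fun s t hst =>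
    div_le_div_of_nonneg_right (max_le_max le_rfl (by linarith)) hdj
  have hρ_mul : ∀ t ≤ D, (D - d j) * ρ t = max 0 (t - d j) := by
    intro t ht
    rcases hdj.eq_or_lt with h | h
    · rw [← h, zero_mul, max_eq_left (by linarith)]
    · exact mul_div_cancel₀ _ h.ne'
  have hρ_mem : ∀ t ∈ Icc 0 D, ρ t ∈ Icc 0 1 :=
    fun t ht => ⟨div_nonneg (le_max_left _ _) hdj,
      div_le_one_of_le₀ (max_le hdj (by linarith [ht.2])) hdj⟩
  set f : I → ℝ → ℝ := fun i t => if i = j then min t (d j) else d i * ρ t with hf_def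
  have hsum : ∀ t ∈ Icc 0 D, HasSum (fun i => f i t) t := by
    intro t ht
    have hupdate := (hd.mul_right (ρ t)).update j (min t (d j))
    have hvalue : min t (d j) - d j * ρ t + D * ρ t = t := by
      calc min t (d j) - d j * ρ t + D * ρ t = min t (d j) + max 0 (t - d j) := by
            rw [← hρ_mul t ht.2]; ring
        _ = t := by
            rcases le_total t (d j) with h | h
            · rw [min_eq_left h, max_eq_left (by linarith), add_zero]
            · rw [min_eq_right h, max_eq_right (by linarith)]; ring
    rwa [hvalue, show Function.update _ j _ = fun i => f i t from
      funext fun i => Function.update_apply _ _ _ _] at hupdate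
  refine ⟨f, ⟨fun i => ?_, fun i t ht => ?_, hsum⟩, fun t => ?_⟩
  · obtain rfl | hij := eq_or_ne i j
    · simp only [hf_def, if_true]
      exact fun s t hst => min_le_min_right _ hst
    · simp only [hf_def, if_neg hij]
      exact fun s t hst => mul_le_mul_of_nonneg_left (hρ_mono hst) (hd0 i)
  · obtain rfl | hij := eq_or_ne i j
    · simp only [hf_def, if_true]
      exact ⟨le_min ht.1 (hd0 i), min_le_right _ _⟩
    · simp only [hf_def, if_neg hij]
      exact ⟨mul_nonneg (hd0 i) (hρ_mem t ht).1, mul_le_of_le_one_right (hd0 i) (hρ_mem t ht).2⟩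
  · rcases le_total (d j) t with h | h
    · exact Or.inl (by simp [hf_def, min_eq_right h])
    · refine Or.inr fun i hij => ?_
      simp only [hf_def, if_neg hij, hρ, max_eq_left (sub_nonpos.2 h), zero_div, mul_zero]

end Schedule

section L1Product

variable {I : Type*} {T : I → Type*} [∀ i, MetricSpace (T i)]

theorem l1dist_comm (p q : ∀ i, T i) : l1dist p q = l1dist q p := by
  simp only [l1dist, edist_comm]

theorem InL1.tsum_edist_ne_top {a p q : ∀ i, T i} (hp : InL1 a p) (hq : InL1 a q) :
    ∑' i, edist (p i) (q i) ≠ ⊤ := by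
  refine (lt_of_le_of_lt
    (ENNReal.tsum_le_tsum fun i => edist_triangle_left (p i) (q i) (a i)) ?_).ne
  rw [ENNReal.tsum_add]
  exact ENNReal.add_lt_top.2 ⟨hp.2, hq.2⟩

theorem InL1.hasSum_dist {a p q : ∀ i, T i} (hp : InL1 a p) (hq : InL1 a q) :
    HasSum (fun i => dist (p i) (q i)) (l1dist p q) := by
  rw [l1dist, ENNReal.tsum_toReal_eq fun i => edist_ne_top _ _]
  simpa only [← dist_edist] using ENNReal.hasSum_toReal (hp.tsum_edist_ne_top hq)

theorem InL1.of_edist_le {a p q y : ∀ i, T i} (hp : InL1 a p) (hq : InL1 a q)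
    (hy : ∀ i, edist (p i) (y i) ≤ edist (p i) (q i)) : InL1 a y := by
  constructor
  · refine (hp.1.union hq.1).mono fun i hi => ?_
    by_contra h
    simp only [mem_union, mem_ofPred_eq, not_or, not_not] at h
    have hpy : edist (p i) (y i) = 0 := by simpa [h.1, h.2] using hy i
    exact hi (by rw [← edist_eq_zero.1 hpy, h.1])
  · calc ∑' i, edist (a i) (y i) ≤ ∑' i, (edist (a i) (p i) + edist (p i) (q i)) :=
          ENNReal.tsum_le_tsum fun i => (edist_triangle _ (p i) _).trans (add_le_add le_rfl (hy i))
      _ < ⊤ := by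
          rw [ENNReal.tsum_add]
          exact ENNReal.add_lt_top.2 ⟨hp.2, (hp.tsum_edist_ne_top hq).lt_top⟩

/-- A geodesic of `S₀`, the ℓ¹-product around the basepoint `a`. -/
def IsL1GeodesicFrom (a : ∀ i, T i) (γ : ℝ → ∀ i, T i) (p q : ∀ i, T i) : Prop :=
  γ 0 = p ∧ γ (l1dist p q) = q ∧
    (∀ s ∈ Icc (0 : ℝ) (l1dist p q), ∀ t ∈ Icc (0 : ℝ) (l1dist p q),
      l1dist (γ s) (γ t) = |s - t|) ∧
    ∀ t ∈ Icc (0 : ℝ) (l1dist p q), InL1 a (γ t)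

theorem isL1GeodesicFrom_of_isSchedule {a p q : ∀ i, T i} (hp : InL1 a p) (hq : InL1 a q)
    {σ : ∀ i, ℝ → T i} (hσ : ∀ i, IsGeodesicFrom (σ i) (p i) (q i)) {f : I → ℝ → ℝ}
    (hf : IsSchedule (fun i => dist (p i) (q i)) (l1dist p q) f) :
    IsL1GeodesicFrom a (fun t i => σ i (f i t)) p q := by
  have hD : 0 ≤ l1dist p q := ENNReal.toReal_nonneg
  have hσ_edist : ∀ i, ∀ u ∈ Icc 0 (dist (p i) (q i)), ∀ v ∈ Icc 0 (dist (p i) (q i)), u ≤ v →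
      edist (σ i u) (σ i v) = ENNReal.ofReal (v - u) := by
    intro i u hu v hv huv
    rw [edist_dist, (hσ i).2.2 u hu v hv, abs_sub_comm, abs_of_nonneg (sub_nonneg.2 huv)]
  have hforward : ∀ s ∈ Icc 0 (l1dist p q), ∀ t ∈ Icc 0 (l1dist p q), s ≤ t →
      l1dist (fun i => σ i (f i s)) (fun i => σ i (f i t)) = t - s := by
    intro s hs t ht hst
    have hmono : ∀ i, 0 ≤ f i t - f i s := fun i => sub_nonneg.2 (hf.1 i hst)
    have hsum : HasSum (fun i => f i t - f i s) (t - s) := (hf.2.2 t ht).sub (hf.2.2 s hs)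
    simp only [l1dist]
    rw [tsum_congr fun i => hσ_edist i _ (hf.2.1 i s hs) _ (hf.2.1 i t ht) (hf.1 i hst),
      ← ENNReal.ofReal_tsum_of_nonneg hmono hsum.summable, hsum.tsum_eq,
      ENNReal.toReal_ofReal (sub_nonneg.2 hst)]
  refine ⟨funext fun i => ?_, funext fun i => ?_, fun s hs t ht => ?_, fun t ht => ?_⟩
  · show σ i (f i 0) = p i
    rw [hf.apply_zero hD, (hσ i).1]
  · show σ i (f i _) = q i
    rw [hf.apply_right (hp.hasSum_dist hq) hD, (hσ i).2.1]
  · rcases le_total s t with hst | hts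
    · rw [hforward s hs t ht hst, abs_sub_comm, abs_of_nonneg (sub_nonneg.2 hst)]
    · rw [l1dist_comm, hforward t ht s hs hts, abs_of_nonneg (sub_nonneg.2 hts)]
  · refine hp.of_edist_le hq fun i => ?_
    have hmem := hf.2.1 i t ht
    rw [← (hσ i).1, hσ_edist i 0 ⟨le_rfl, hmem.1.trans hmem.2⟩ _ hmem hmem.1, sub_zero,
      (hσ i).1, edist_dist]
    exact ENNReal.ofReal_le_ofReal hmem.2

theorem exists_isL1GeodesicFrom_first {a p q : ∀ i, T i}
    (hgeod : ∀ i, ∀ u v : T i, ∃ σ : ℝ → T i, IsGeodesicFrom σ u v)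
    (hp : InL1 a p) (hq : InL1 a q) (j : I) :
    ∃ γ, IsL1GeodesicFrom a γ p q ∧ ∀ t, γ t j = q j ∨ ∀ i ≠ j, γ t i = p i := by
  choose σ hσ using fun i => hgeod i (p i) (q i)
  obtain ⟨f, hf, hfirst⟩ := exists_isSchedule_first (fun i => dist_nonneg) (hp.hasSum_dist hq) j
  refine ⟨fun t i => σ i (f i t), isL1GeodesicFrom_of_isSchedule hp hq hσ hf, fun t => ?_⟩
  rcases hfirst t with hj | hrest
  · exact Or.inl (by simp only [hj, (hσ j).2.1])
  · exact Or.inr fun i hij => by simp only [hrest i hij, (hσ i).1]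

end L1Product

theorem mapsTo_Icc_of_relOpen_partition {X : Type*} (ρ : X → X → ℝ) {S A B : Set X}
    (hAB : A ∪ B = S) (hdisj : A ∩ B = ∅)
    (hA : ∀ p ∈ A, ∃ ε > 0, ∀ q ∈ S, ρ p q < ε → q ∈ A)
    (hB : ∀ p ∈ B, ∃ ε > 0, ∀ q ∈ S, ρ p q < ε → q ∈ B)
    {γ : ℝ → X} {a b : ℝ} (hγS : MapsTo γ (Icc a b) S)
    (hγ : ∀ s ∈ Icc a b, ∀ t ∈ Icc a b, ρ (γ s) (γ t) ≤ |s - t|) (ha : γ a ∈ A) :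
    MapsTo γ (Icc a b) A := by
  have hopen : ∀ C : Set X, (∀ p ∈ C, ∃ ε > 0, ∀ q ∈ S, ρ p q < ε → q ∈ C) →
      IsOpen {t : Icc a b | γ t ∈ C} := by
    intro C hC
    refine Metric.isOpen_iff.2 fun t ht => ?_
    obtain ⟨ε, hε, hball⟩ := hC _ ht
    refine ⟨ε, hε, fun s hs => hball _ (hγS s.2) ((hγ t t.2 s s.2).trans_lt ?_)⟩
    rwa [Metric.mem_ball, Subtype.dist_eq, dist_comm, Real.dist_eq] at hs
  have hcompl : {t : Icc a b | γ t ∈ A}ᶜ = {t : Icc a b | γ t ∈ B} := by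
    ext t
    have ht : γ t ∈ A ∪ B := hAB ▸ hγS t.2
    have hAB' : γ t ∉ A ∩ B := hdisj ▸ notMem_empty _
    rw [mem_union] at ht
    rw [mem_inter_iff] at hAB'
    simp only [mem_compl_iff, mem_ofPred_eq]
    tauto
  have hclopen : IsClopen {t : Icc a b | γ t ∈ A} :=
    ⟨isOpen_compl_iff.1 (hcompl ▸ hopen B hB), hopen A hA⟩
  intro t ht
  have := Subtype.preconnectedSpace (isPreconnected_Icc (a := a) (b := b))
  have huniv := hclopen.eq_univ ⟨⟨a, left_mem_Icc.2 (ht.1.trans ht.2)⟩, ha⟩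
  exact (huniv ▸ mem_univ (⟨t, ht⟩ : Icc a b) :)

theorem exists_forall_ne_apply_eq_of_cross {ι : Type*} {β : ι → Type*} {x : ∀ i, β i}
    {A B : Set (∀ i, β i)} (hx : x ∉ A ∪ B) (hA : A.Nonempty) (hB : B.Nonempty)
    (hcross : ∀ p ∈ A, ∀ q ∈ B, ∀ i j, i ≠ j → p i ≠ x i → q j = x j) :
    ∃ j, ∀ y ∈ A ∪ B, ∀ i ≠ j, y i = x i := by
  obtain ⟨p, hp⟩ := hA
  obtain ⟨q, hq⟩ := hB
  obtain ⟨k, hpk⟩ := Function.ne_iff.1 (ne_of_mem_of_not_mem hp fun h => hx (Or.inl h))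
  have hqk : q k ≠ x k := by
    obtain ⟨m, hqm⟩ := Function.ne_iff.1 (ne_of_mem_of_not_mem hq fun h => hx (Or.inr h))
    rcases eq_or_ne k m with rfl | hkm
    · exact hqm
    · exact absurd (hcross p hp q hq k m hkm hpk) hqm
  refine ⟨k, fun y hy i hik => by_contra fun hyi => ?_⟩
  rcases hy with hyA | hyB
  · exact hqk (hcross y hyA q hq i k hik hyi)
  · exact hyi (hcross p hp y hyB k i hik.symm hpk)

theorem apply_eq_of_separated {I : Type*} {T : I → Type*} [∀ i, MetricSpace (T i)]
    {a x p q : ∀ i, T i} {Y A B : Set (∀ i, T i)}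
    (hgeod : ∀ i, ∀ u v : T i, ∃ σ : ℝ → T i, IsGeodesicFrom σ u v)
    (hYS : ∀ y ∈ Y, InL1 a y)
    (hconv : ∀ p ∈ Y, ∀ q ∈ Y, ∀ γ, IsL1GeodesicFrom a γ p q → MapsTo γ (Icc 0 (l1dist p q)) Y)
    (hAB : A ∪ B = Y \ {x}) (hABdisj : A ∩ B = ∅)
    (hAopen : ∀ p ∈ A, ∃ ε > 0, ∀ q ∈ Y \ {x}, l1dist p q < ε → q ∈ A)
    (hBopen : ∀ p ∈ B, ∃ ε > 0, ∀ q ∈ Y \ {x}, l1dist p q < ε → q ∈ B)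
    (hp : p ∈ A) (hq : q ∈ B) {i j : I} (hij : i ≠ j) (hpi : p i ≠ x i) : q j = x j := by
  have hpY : p ∈ Y \ {x} := hAB ▸ Or.inl hp
  have hqY : q ∈ Y \ {x} := hAB ▸ Or.inr hq
  by_contra hqj
  obtain ⟨γ, hγ, hfirst⟩ := exists_isL1GeodesicFrom_first hgeod (hYS p hpY.1) (hYS q hqY.1) j
  have hγx : ∀ t, γ t ≠ x := by
    intro t hx
    rcases hfirst t with hj | hrest
    · exact hqj (hj ▸ hx ▸ rfl)
    · exact hpi (hrest i hij ▸ hx ▸ rfl)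
  have hγA := mapsTo_Icc_of_relOpen_partition l1dist hAB hABdisj hAopen hBopen
    (fun t ht => ⟨hconv p hpY.1 q hqY.1 γ hγ ht, hγx t⟩)
    (fun s hs t ht => (hγ.2.2.1 s hs t ht).le) (hγ.1 ▸ hp)
  have hqA : q ∈ A := hγ.2.1 ▸ hγA ⟨ENNReal.toReal_nonneg, le_rfl⟩
  exact notMem_empty q (hABdisj ▸ ⟨hqA, hq⟩)

theorem statement5_general {I : Type*} {T : I → Type*} [∀ i, MetricSpace (T i)]
    (htree : ∀ i : I, IsRTree (T i))
    (a : ∀ i, T i)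
    (Y : Set (∀ i, T i)) (hYS : ∀ y ∈ Y, InL1 a y)
    (hconv : ∀ p ∈ Y, ∀ q ∈ Y, ∀ γ : ℝ → ∀ i, T i,
      γ 0 = p → γ (l1dist p q) = q →
      (∀ s ∈ Set.Icc (0 : ℝ) (l1dist p q), ∀ t ∈ Set.Icc (0 : ℝ) (l1dist p q),
        l1dist (γ s) (γ t) = |s - t|) →
      (∀ t ∈ Set.Icc (0 : ℝ) (l1dist p q), InL1 a (γ t)) →
      ∀ t ∈ Set.Icc (0 : ℝ) (l1dist p q), γ t ∈ Y)
    (x : ∀ i, T i)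
    (A B : Set (∀ i, T i))
    (hA : A.Nonempty) (hB : B.Nonempty)
    (hAB : A ∪ B = Y \ {x}) (hABdisj : A ∩ B = ∅)
    (hAopen : ∀ p ∈ A, ∃ ε > 0, ∀ q ∈ Y \ {x}, l1dist p q < ε → q ∈ A)
    (hBopen : ∀ p ∈ B, ∃ ε > 0, ∀ q ∈ Y \ {x}, l1dist p q < ε → q ∈ B) :
    ∃ j : I, ∀ y ∈ Y, ∀ i : I, i ≠ j → y i = x i := by
  obtain ⟨j, hj⟩ := exists_forall_ne_apply_eq_of_cross (by simp [hAB]) hA hB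
    fun p hp q hq i j hij hpi => apply_eq_of_separated (fun i => (htree i).1) hYS
      (fun p hp q hq γ hγ => hconv p hp q hq γ hγ.1 hγ.2.1 hγ.2.2.1 hγ.2.2.2)
      hAB hABdisj hAopen hBopen hp hq hij hpi
  refine ⟨j, fun y hy i hij => ?_⟩
  by_cases hyx : y = x
  · rw [hyx]
  · exact hj y (hAB ▸ ⟨hy, hyx⟩) i hij

/-- Let `S₀` be the ℓ¹-product of a family of ℝ-trees `T i` with basepoint
`a`, let `Y ⊆ S₀` be a strongly convex subset with at least two points, and let `x ∈ Y` be a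
global cut-point of `Y` (so `Y \ {x}` is disconnected, witnessed by a partition into two
nonempty relatively open subsets `A, B`). Then there is an index `j` such that every point
of `Y` agrees with `x` in every coordinate `i ≠ j`; that is, `Y` is contained in the factor
`{ y ∈ S₀ : y i = x i for all i ≠ j }`. -/
theorem statement5 {I : Type*} {T : I → Type*} [∀ i, MetricSpace (T i)]
    (htree : ∀ i : I, IsRTree (T i))
    (a : ∀ i, T i)
    (Y : Set (∀ i, T i)) (hYS : ∀ y ∈ Y, InL1 a y)
    (hY2 : ∃ y ∈ Y, ∃ z ∈ Y, y ≠ z)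
    (hconv : ∀ p ∈ Y, ∀ q ∈ Y, ∀ γ : ℝ → ∀ i, T i,
      γ 0 = p → γ (l1dist p q) = q →
      (∀ s ∈ Set.Icc (0 : ℝ) (l1dist p q), ∀ t ∈ Set.Icc (0 : ℝ) (l1dist p q),
        l1dist (γ s) (γ t) = |s - t|) →
      (∀ t ∈ Set.Icc (0 : ℝ) (l1dist p q), InL1 a (γ t)) →
      ∀ t ∈ Set.Icc (0 : ℝ) (l1dist p q), γ t ∈ Y)
    (x : ∀ i, T i) (hxY : x ∈ Y)
    (A B : Set (∀ i, T i))
    (hA : A.Nonempty) (hB : B.Nonempty)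
    (hAB : A ∪ B = Y \ {x}) (hABdisj : A ∩ B = ∅)
    (hAopen : ∀ p ∈ A, ∃ ε > 0, ∀ q ∈ Y \ {x}, l1dist p q < ε → q ∈ A)
    (hBopen : ∀ p ∈ B, ∃ ε > 0, ∀ q ∈ Y \ {x}, l1dist p q < ε → q ∈ B) :
    ∃ j : I, ∀ y ∈ Y, ∀ i : I, i ≠ j → y i = x i :=
  statement5_general htree a Y hYS hconv x A B hA hB hAB hABdisj hAopen hBopen
end

section
/- Let Λ be a group generated by a finite symmetric set A = A⁻¹, and let G be a finitely generated group equipped with a word metric dist. Let (φₙ)_{n∈ℕ} be a sequence of homomorphisms Λ → G which are pairwise non-conjugate in G, i.e. for all n ≠ m there is no g ∈ G with φₘ(h) = g φₙ(h) g⁻¹ for all h ∈ Λ. For each n set dₙ = inf_{x∈G} sup_{a∈A} dist(φₙ(a)x, x). Then lim_{n→∞} dₙ = ∞. -/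
/-- The metric on the group `G` is the word metric associated with the finite generating set
`S`: `dist g h` is the least length of a word in `S ∪ S⁻¹` representing `g⁻¹ * h`. -/
def IsWordMetric {G : Type*} [Group G] [MetricSpace G] (S : Finset G) : Prop :=
  Subgroup.closure (S : Set G) = ⊤ ∧
  ∀ g h : G, dist g h =
    ↑(sInf {n : ℕ | ∃ w : List G, w.length = n ∧ (∀ u ∈ w, u ∈ S ∨ u⁻¹ ∈ S) ∧
      g⁻¹ * h = w.prod})

/-!
If `d n` stayed below `r` along infinitely many `n`, pick `x n` almost realising the infimum.
The conjugates `(x n)⁻¹ * φ n a * x n` of the generators then lie in the ball of radius `r + 1`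
about `1`, which is finite for a word metric. By pigeonhole two distinct indices `n ≠ m` give the
same tuple of conjugated generators, and since `A` generates `Λ` this makes `φ n` and `φ m`
conjugate.
-/

theorem MonoidHom.exists_conj_eq_of_conj_eqOn_closure {Λ G : Type*} [Group Λ] [Group G]
    {A : Set Λ} (hA : Subgroup.closure A = ⊤) {φ ψ : Λ →* G} {x y : G}
    (h : ∀ a ∈ A, x⁻¹ * φ a * x = y⁻¹ * ψ a * y) :
    ∃ g : G, ∀ l : Λ, ψ l = g * φ l * g⁻¹ := by
  refine ⟨y * x⁻¹, DFunLike.congr_fun (f := ψ)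
    (g := (MulAut.conj (y * x⁻¹)).toMonoidHom.comp φ) (eq_of_eqOn_dense hA fun a ha => ?_)⟩
  calc ψ a = y * (y⁻¹ * ψ a * y) * y⁻¹ := by group
    _ = y * (x⁻¹ * φ a * x) * y⁻¹ := by rw [h a ha]
    _ = _ := by
      simp only [MonoidHom.comp_apply, MulEquiv.coe_toMonoidHom, MulAut.conj_apply]
      group

namespace IsWordMetric

variable {G : Type*} [Group G] [MetricSpace G] {S : Finset G}

theorem dist_mul_left (hS : IsWordMetric S) (k g h : G) : dist (k * g) (k * h) = dist g h := by
  simp only [hS.2, mul_inv_rev, mul_assoc, inv_mul_cancel_left]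

theorem dist_mul_eq_dist_conj_one (hS : IsWordMetric S) (g x : G) :
    dist (g * x) x = dist (x⁻¹ * g * x) 1 := by
  rw [← hS.dist_mul_left x⁻¹, mul_assoc, inv_mul_cancel]

theorem exists_list_prod_eq (hS : IsWordMetric S) (x g : G) :
    ∃ w : List G, (w.length : ℝ) = dist x g ∧ (∀ u ∈ w, u ∈ S ∨ u⁻¹ ∈ S) ∧
      x⁻¹ * g = w.prod := by
  rcases Set.eq_empty_or_nonempty {n : ℕ | ∃ w : List G, w.length = n ∧
      (∀ u ∈ w, u ∈ S ∨ u⁻¹ ∈ S) ∧ x⁻¹ * g = w.prod} with hempty | hne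
  · -- `sInf ∅ = 0`, so `dist x g = 0` and the empty word works
    have hxg : dist x g = 0 := by rw [hS.2, hempty, Nat.sInf_empty, Nat.cast_zero]
    obtain rfl := dist_eq_zero.mp hxg
    exact ⟨[], by simp, by simp, by simp⟩
  · obtain ⟨w, hlen, hw, hprod⟩ := Nat.sInf_mem hne
    exact ⟨w, by rw [hS.2, hlen], hw, hprod⟩

theorem finite_closedBall (hS : IsWordMetric S) (x : G) (r : ℝ) :
    (Metric.closedBall x r).Finite := by
  let U := {u : G // u ∈ S ∨ u⁻¹ ∈ S}
  have : Finite U := Set.Finite.to_subtype <|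
    (S.finite_toSet.union (S.finite_toSet.preimage inv_injective.injOn)).subset fun _ h => h
  refine ((List.finite_length_le U ⌊r⌋₊).image fun l => x * (l.map (↑)).prod).subset ?_
  intro g hg
  obtain ⟨w, hlen, hw, hprod⟩ := hS.exists_list_prod_eq x g
  lift w to List U using hw
  rw [List.length_map] at hlen
  refine ⟨w, Nat.le_floor ?_, show x * _ = g by rw [← hprod, mul_inv_cancel_left]⟩
  rwa [hlen, dist_comm]

end IsWordMetric

theorem finite_setOf_forall_dist_mul_le {ι Λ G : Type*} [Group Λ] [Group G]
    [MetricSpace G] {A : Finset Λ} (hA : Subgroup.closure (A : Set Λ) = ⊤) {S : Finset G}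
    (hS : IsWordMetric S)
    {φ : ι → Λ →* G} (hφ : Pairwise fun n k => ¬ ∃ g : G, ∀ l, φ k l = g * φ n l * g⁻¹)
    (x : ι → G) (r : ℝ) :
    {n | ∀ a ∈ A, dist (φ n a * x n) (x n) ≤ r}.Finite := by
  by_contra hinf
  have hmaps : Set.MapsTo (fun n (a : A) => (x n)⁻¹ * φ n a * x n)
      {n | ∀ a ∈ A, dist (φ n a * x n) (x n) ≤ r}
      (Set.univ.pi fun _ => Metric.closedBall 1 r) := fun n hn a _ => by
    simpa [Metric.mem_closedBall, ← hS.dist_mul_eq_dist_conj_one] using hn a a.2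
  obtain ⟨n, -, m, -, hnm, hconj⟩ :=
    Set.Infinite.exists_ne_map_eq_of_mapsTo hinf hmaps
      (Set.Finite.pi fun _ => hS.finite_closedBall 1 r)
  exact hφ hnm <|
    MonoidHom.exists_conj_eq_of_conj_eqOn_closure hA fun a ha => congrFun hconj ⟨a, ha⟩

theorem le_biSup_of_mem_finset {ι α : Type*} [ConditionallyCompleteLattice α] {A : Finset ι}
    (f : ι → α) {a : ι} (ha : a ∈ A) :
    f a ≤ ⨆ i ∈ A, f i :=
  le_ciSup₂ (f := fun i (_ : i ∈ A) => f i) ((A.finite_toSet.image f).bddAbove.mono <| by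
    simp only [Set.subset_def, Set.mem_iUnion, Set.mem_range]
    rintro _ ⟨i, hi, rfl⟩
    exact ⟨i, hi, rfl⟩) a ha

theorem statement7_general {Λ G : Type*} [Group Λ] [Group G] [MetricSpace G]
    (A : Finset Λ) (hAgen : Subgroup.closure (A : Set Λ) = ⊤)
    (S : Finset G) (hword : IsWordMetric S)
    (φ : ℕ → (Λ →* G))
    (hnc : ∀ n k : ℕ, n ≠ k → ¬ ∃ g : G, ∀ h : Λ, φ k h = g * φ n h * g⁻¹) :
    Filter.Tendsto (fun n : ℕ => ⨅ x : G, ⨆ a ∈ A, dist (φ n a * x) x)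
      Filter.atTop Filter.atTop := by
  set d := fun n : ℕ => ⨅ x : G, ⨆ a ∈ A, dist (φ n a * x) x
  choose x hx using fun n => exists_lt_of_ciInf_lt (lt_add_one (d n))
  refine Filter.tendsto_atTop.2 fun r => ?_
  have hfin := finite_setOf_forall_dist_mul_le hAgen hword (fun n k => hnc n k) x (r + 1)
  filter_upwards [Nat.cofinite_eq_atTop ▸ hfin.eventually_cofinite_notMem] with n hn
  by_contra! hdr
  exact hn fun a ha =>
    (le_biSup_of_mem_finset (fun a => dist (φ n a * x n) (x n)) ha).trans (by linarith [hx n])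

/-- Let `Λ` be a group generated by the finite symmetric set `A`, and let
`G` be a finitely generated group with a word metric. If `(φ n)` is a sequence of
homomorphisms `Λ →* G` that are pairwise non-conjugate in `G`, then
`d n = inf_{x ∈ G} sup_{a ∈ A} dist (φ n a * x) x` tends to infinity. -/
theorem statement7 {Λ G : Type*} [Group Λ] [Group G] [MetricSpace G]
    (A : Finset Λ) (hAgen : Subgroup.closure (A : Set Λ) = ⊤)
    (hAsymm : ∀ a ∈ A, a⁻¹ ∈ A)
    (S : Finset G) (hword : IsWordMetric S)
    (φ : ℕ → (Λ →* G))
    (hnc : ∀ n k : ℕ, n ≠ k → ¬ ∃ g : G, ∀ h : Λ, φ k h = g * φ n h * g⁻¹) :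
    Filter.Tendsto (fun n : ℕ => ⨅ x : G, ⨆ a ∈ A, dist (φ n a * x) x)
      Filter.atTop Filter.atTop :=
  statement7_general A hAgen S hword φ hnc
end

section
/- Let Λ be a group generated by a finite symmetric set A = A⁻¹, let G be a finitely generated group with word metric dist, and let (φₙ)_{n∈ℕ} be homomorphisms Λ → G. For each n set dₙ = inf_{x∈G} sup_{a∈A} dist(φₙ(a)x, x), and choose xₙ ∈ G realizing this infimum, i.e. dₙ = sup_{a∈A} dist(φₙ(a)xₙ, xₙ) (such xₙ exists since the word metric is integer-valued). Let ω be a nonprincipal ultrafilter on ℕ and assume lim_ω dₙ = ∞. Then the formula g · [(yₙ)] = [(φₙ(g) yₙ)] gives a well-defined action of Λ by isometries on the asymptotic cone Con_ω(G; (xₙ), (dₙ)), and this action has no global fixed point; indeed, for every point y of the cone one has sup_{a∈A} dist_cone(a · y, y) ≥ 1. -/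
/-- The pseudodistance, in the asymptotic cone `Con_ω(G; (x n), (d n))`, between the points
represented by the sequences `y` and `z`: the ω-limit of `dist (y n) (z n) / d n`. -/
noncomputable def coneDist {G : Type*} [MetricSpace G] (ω : Ultrafilter ℕ)
    (d : ℕ → ℝ) (y z : ℕ → G) : ℝ :=
  Filter.limUnder (ω : Filter ℕ) (fun n => dist (y n) (z n) / d n)

/-- The sequence `y` represents a point of the asymptotic cone `Con_ω(G; (x n), (d n))`:
its rescaled distance to the observation point is ω-essentially bounded. -/
def InCone {G : Type*} [MetricSpace G] (ω : Ultrafilter ℕ)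
    (x : ℕ → G) (d : ℕ → ℝ) (y : ℕ → G) : Prop :=
  ∃ M : ℝ, ∀ᶠ n in (ω : Filter ℕ), dist (y n) (x n) ≤ M * d n

/-!
Left multiplication is an isometry of the word metric, so each `φ n g` acts by isometries on the
rescaled sequences, and the action laws hold already termwise. Since `Λ` is generated by `A`,
the displacement of `φ n g` at `x n` is at most `C_g · d n`, so `Λ` preserves the cone. For a
point `[(y n)]`, minimality of `d n` gives for each `n` some `a ∈ A` moving `y n` by at least
`d n`; as `A` is finite, one `a` works for ω-almost every `n`, and then the rescaled
displacements of `a` lie in a compact interval `[1, M]`, so their ω-limit is at least `1`.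
-/

open Filter Topology

theorem Real.le_finset_biSup {ι : Type*} {A : Finset ι} (f : ι → ℝ) {a : ι} (ha : a ∈ A) :
    f a ≤ ⨆ b ∈ A, f b := by
  have hbdd : BddAbove (Set.range fun b => ⨆ _ : b ∈ A, f b) := by
    refine (insert 0 (A.image f)).bddAbove.mono ?_
    rintro _ ⟨b, rfl⟩
    by_cases hb : b ∈ A
    · simp only [ciSup_pos hb]; exact Finset.mem_insert_of_mem (Finset.mem_image_of_mem f hb)
    · simp [hb]
  calc f a = ⨆ _ : a ∈ A, f a := (ciSup_pos (f := fun _ => f a) ha).symm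
    _ ≤ ⨆ b ∈ A, f b := le_ciSup hbdd a

-- `0 < c` rules out `A = ∅`, where the supremum is the junk value `0`.
theorem Real.exists_mem_le_of_le_finset_biSup {ι : Type*} {A : Finset ι} {f : ι → ℝ} {c : ℝ}
    (hc : 0 < c) (h : c ≤ ⨆ a ∈ A, f a) : ∃ a ∈ A, c ≤ f a := by
  by_cases hnonneg : ∃ a ∈ A, 0 ≤ f a
  · obtain ⟨a, ha, hsup⟩ := Finset.mem_image.1 (A.ciSup_mem_image f (by simpa using hnonneg))
    exact ⟨a, ha, hsup ▸ h⟩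
  · push Not at hnonneg
    have : ⨆ a ∈ A, f a ≤ 0 :=
      Real.iSup_nonpos fun a => Real.iSup_nonpos fun ha => (hnonneg a ha).le
    linarith

theorem Ultrafilter.exists_mem_eventually_of_finset {α ι : Type*} {ω : Ultrafilter α}
    {A : Finset ι} {p : ι → α → Prop} (h : ∀ᶠ n in (ω : Filter α), ∃ a ∈ A, p a n) :
    ∃ a ∈ A, ∀ᶠ n in (ω : Filter α), p a n := by
  have hunion : (⋃ a ∈ (A : Set ι), {n | p a n}) ∈ ω := by
    filter_upwards [h] with n ⟨a, ha, hpa⟩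
    exact Set.mem_biUnion ha hpa
  exact (Ultrafilter.finite_biUnion_mem_iff A.finite_toSet).1 hunion

theorem Ultrafilter.limUnder_mem_of_isCompact {α X : Type*} [TopologicalSpace X] [T2Space X]
    [Nonempty X] {ω : Ultrafilter α} {f : α → X} {K : Set X} (hK : IsCompact K)
    (h : ∀ᶠ n in (ω : Filter α), f n ∈ K) : limUnder (ω : Filter α) f ∈ K := by
  obtain ⟨c, hc, hlim⟩ := hK.ultrafilter_le_nhds (ω.map f) (by
    rwa [Ultrafilter.coe_map, le_principal_iff, Filter.mem_map])
  rwa [(show Tendsto f ω (𝓝 c) from hlim).limUnder_eq]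

theorem IsWordMetric.isIsometricSMul {G : Type*} [Group G] [MetricSpace G] {S : Finset G}
    (h : IsWordMetric S) : IsIsometricSMul G G :=
  ⟨fun g => Isometry.of_dist_eq fun y z => by
    simp only [h.2, smul_eq_mul, mul_inv_rev, mul_assoc, inv_mul_cancel_left]⟩

theorem exists_dist_map_mul_le_of_mem_closure {ι Λ G : Type*} [Group Λ] [Group G]
    [PseudoMetricSpace G] [IsIsometricSMul G G] {A : Set Λ} (φ : ι → Λ →* G) (x : ι → G)
    (d : ι → ℝ) (hA : ∀ i, ∀ a ∈ A, dist (φ i a * x i) (x i) ≤ d i) {g : Λ}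
    (hg : g ∈ Subgroup.closure A) : ∃ C : ℝ, ∀ i, dist (φ i g * x i) (x i) ≤ C * d i := by
  induction hg using Subgroup.closure_induction with
  | mem a ha => exact ⟨1, fun i => by simpa using hA i a ha⟩
  | one => exact ⟨0, fun i => by simp⟩
  | mul g h _ _ hg hh =>
    obtain ⟨C₁, hC₁⟩ := hg
    obtain ⟨C₂, hC₂⟩ := hh
    refine ⟨C₁ + C₂, fun i => ?_⟩
    calc dist (φ i (g * h) * x i) (x i)
        ≤ dist (φ i g * (φ i h * x i)) (φ i g * x i) + dist (φ i g * x i) (x i) := by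
          rw [map_mul, mul_assoc]; exact dist_triangle _ _ _
      _ = dist (φ i h * x i) (x i) + dist (φ i g * x i) (x i) := by rw [dist_mul_left]
      _ ≤ C₂ * d i + C₁ * d i := add_le_add (hC₂ i) (hC₁ i)
      _ = (C₁ + C₂) * d i := by ring
  | inv g _ hg =>
    obtain ⟨C, hC⟩ := hg
    refine ⟨C, fun i => ?_⟩
    calc dist (φ i g⁻¹ * x i) (x i) = dist (φ i g * x i) (x i) := by
          rw [← dist_mul_left (φ i g), map_inv, mul_inv_cancel_left, dist_comm]
      _ ≤ C * d i := hC i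

section Cone

variable {G : Type*} {ω : Ultrafilter ℕ} {x y z : ℕ → G} {d : ℕ → ℝ}

theorem coneDist_self [MetricSpace G] (y : ℕ → G) : coneDist ω d y y = 0 := by
  simp [coneDist, tendsto_const_nhds.limUnder_eq]

theorem one_le_coneDist [MetricSpace G] (hy : InCone ω x d y) (hz : InCone ω x d z)
    (hd : Tendsto d (ω : Filter ℕ) atTop) (hfar : ∀ᶠ n in (ω : Filter ℕ), d n ≤ dist (y n) (z n)) :
    1 ≤ coneDist ω d y z := by
  obtain ⟨M, hM⟩ := hy
  obtain ⟨M', hM'⟩ := hz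
  have hratio : ∀ᶠ n in (ω : Filter ℕ), dist (y n) (z n) / d n ∈ Set.Icc 1 (M + M') := by
    filter_upwards [hd.eventually_gt_atTop 0, hfar, hM, hM'] with n hpos hle hyn hzn
    refine ⟨(one_le_div hpos).2 hle, (div_le_iff₀ hpos).2 ?_⟩
    calc dist (y n) (z n) ≤ dist (y n) (x n) + dist (z n) (x n) := dist_triangle_right _ _ _
      _ ≤ (M + M') * d n := by linarith
  exact (Ultrafilter.limUnder_mem_of_isCompact isCompact_Icc hratio).1

variable [Group G] [MetricSpace G] [IsIsometricSMul G G]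

theorem coneDist_mul_left (g y z : ℕ → G) :
    coneDist ω d (fun n => g n * y n) (fun n => g n * z n) = coneDist ω d y z := by
  simp only [coneDist, dist_mul_left]

theorem InCone.mul_left {g : ℕ → G} {C : ℝ} (hy : InCone ω x d y)
    (hg : ∀ n, dist (g n * x n) (x n) ≤ C * d n) : InCone ω x d (fun n => g n * y n) := by
  obtain ⟨M, hM⟩ := hy
  refine ⟨M + C, ?_⟩
  filter_upwards [hM] with n hn
  calc dist (g n * y n) (x n) ≤ dist (g n * y n) (g n * x n) + dist (g n * x n) (x n) :=
        dist_triangle _ _ _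
    _ ≤ M * d n + C * d n := by rw [dist_mul_left]; exact add_le_add hn (hg n)
    _ = (M + C) * d n := by ring

end Cone

theorem statement8_general {Λ G : Type*} [Group Λ] [Group G] [MetricSpace G]
    (A : Finset Λ) (hAgen : Subgroup.closure (A : Set Λ) = ⊤)
    (S : Finset G) (hword : IsWordMetric S)
    (φ : ℕ → (Λ →* G))
    (d : ℕ → ℝ) (hd : ∀ n : ℕ, d n = ⨅ x : G, ⨆ a ∈ A, dist (φ n a * x) x)
    (x : ℕ → G) (hx : ∀ n : ℕ, d n = ⨆ a ∈ A, dist (φ n a * x n) (x n))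
    (ω : Ultrafilter ℕ)
    (hdiv : Filter.Tendsto d (ω : Filter ℕ) Filter.atTop) :
    (∀ (g : Λ) (y : ℕ → G), InCone ω x d y → InCone ω x d (fun n => φ n g * y n)) ∧
    (∀ (g : Λ) (y z : ℕ → G), InCone ω x d y → InCone ω x d z →
      coneDist ω d y z = 0 →
      coneDist ω d (fun n => φ n g * y n) (fun n => φ n g * z n) = 0) ∧
    (∀ (g h : Λ) (y : ℕ → G), InCone ω x d y →
      coneDist ω d (fun n => φ n (g * h) * y n) (fun n => φ n g * (φ n h * y n)) = 0) ∧
    (∀ y : ℕ → G, InCone ω x d y → coneDist ω d (fun n => φ n 1 * y n) y = 0) ∧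
    (∀ (g : Λ) (y z : ℕ → G), InCone ω x d y → InCone ω x d z →
      coneDist ω d (fun n => φ n g * y n) (fun n => φ n g * z n) = coneDist ω d y z) ∧
    (∀ y : ℕ → G, InCone ω x d y →
      1 ≤ ⨆ a ∈ A, coneDist ω d (fun n => φ n a * y n) y) := by
  have := hword.isIsometricSMul
  have hdisp : ∀ n, ∀ a ∈ (A : Set Λ), dist (φ n a * x n) (x n) ≤ d n := fun n a ha => by
    rw [hx n]; exact Real.le_finset_biSup (fun b => dist (φ n b * x n) (x n)) ha
  have hmin : ∀ n (z : G), d n ≤ ⨆ a ∈ A, dist (φ n a * z) z := fun n z => by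
    rw [hd n]
    exact ciInf_le ⟨0, by
      rintro _ ⟨w, rfl⟩; exact Real.iSup_nonneg fun _ => Real.iSup_nonneg fun _ => dist_nonneg⟩ z
  have hmove : ∀ (g : Λ) (y : ℕ → G), InCone ω x d y → InCone ω x d (fun n => φ n g * y n) :=
    fun g y hy =>
      have ⟨C, hC⟩ := exists_dist_map_mul_le_of_mem_closure φ x d hdisp (hAgen ▸ Subgroup.mem_top g)
      hy.mul_left hC
  refine ⟨hmove, fun g y z _ _ h => by rw [coneDist_mul_left, h],
    fun g h y _ => by simp only [map_mul, mul_assoc, coneDist_self],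
    fun y _ => by simp only [map_one, one_mul, coneDist_self],
    fun g y z _ _ => coneDist_mul_left _ y z, fun y hy => ?_⟩
  obtain ⟨a, ha, hfar⟩ : ∃ a ∈ A, ∀ᶠ n in (ω : Filter ℕ), d n ≤ dist (φ n a * y n) (y n) :=
    Ultrafilter.exists_mem_eventually_of_finset <| (hdiv.eventually_gt_atTop 0).mono
      fun n hn => Real.exists_mem_le_of_le_finset_biSup hn (hmin n (y n))
  exact (one_le_coneDist (hmove a y hy) hy hdiv hfar).trans
    (Real.le_finset_biSup (fun b => coneDist ω d (fun n => φ n b * y n) y) ha)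

/-- Let `Λ = ⟨A⟩` with `A` finite symmetric, `G` a finitely generated group
with a word metric, `φ n : Λ →* G` homomorphisms, `d n = inf_x sup_{a ∈ A} dist (φ n a * x) x`
realized at `x n`, and `ω` a nonprincipal ultrafilter with `lim_ω d n = ∞`. Then
`g · [(y n)] = [(φ n g * y n)]` is a well-defined isometric action of `Λ` on the asymptotic
cone `Con_ω(G; (x n), (d n))`: it preserves the cone, respects the identification of points at
cone-distance `0`, satisfies the action laws, and acts by isometries; moreover it has no
global fixed point: every point `y` of the cone satisfies
`sup_{a ∈ A} dist_cone(a · y, y) ≥ 1`. -/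
theorem statement8 {Λ G : Type*} [Group Λ] [Group G] [MetricSpace G]
    (A : Finset Λ) (hAgen : Subgroup.closure (A : Set Λ) = ⊤)
    (hAsymm : ∀ a ∈ A, a⁻¹ ∈ A)
    (S : Finset G) (hword : IsWordMetric S)
    (φ : ℕ → (Λ →* G))
    (d : ℕ → ℝ) (hd : ∀ n : ℕ, d n = ⨅ x : G, ⨆ a ∈ A, dist (φ n a * x) x)
    (x : ℕ → G) (hx : ∀ n : ℕ, d n = ⨆ a ∈ A, dist (φ n a * x n) (x n))
    (ω : Ultrafilter ℕ) (hfree : ∀ s : Set ℕ, s.Finite → s ∉ ω)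
    (hdiv : Filter.Tendsto d (ω : Filter ℕ) Filter.atTop) :
    (∀ (g : Λ) (y : ℕ → G), InCone ω x d y → InCone ω x d (fun n => φ n g * y n)) ∧
    (∀ (g : Λ) (y z : ℕ → G), InCone ω x d y → InCone ω x d z →
      coneDist ω d y z = 0 →
      coneDist ω d (fun n => φ n g * y n) (fun n => φ n g * z n) = 0) ∧
    (∀ (g h : Λ) (y : ℕ → G), InCone ω x d y →
      coneDist ω d (fun n => φ n (g * h) * y n) (fun n => φ n g * (φ n h * y n)) = 0) ∧
    (∀ y : ℕ → G, InCone ω x d y → coneDist ω d (fun n => φ n 1 * y n) y = 0) ∧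
    (∀ (g : Λ) (y z : ℕ → G), InCone ω x d y → InCone ω x d z →
      coneDist ω d (fun n => φ n g * y n) (fun n => φ n g * z n) = coneDist ω d y z) ∧
    (∀ y : ℕ → G, InCone ω x d y →
      1 ≤ ⨆ a ∈ A, coneDist ω d (fun n => φ n a * y n) y) :=
  statement8_general A hAgen S hword φ d hd x hx ω hdiv
end
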